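/- arXiv:1811.09458 — 5 statements merged into one kernel-verified Lean document; each statement's English description precedes it below -/
import Mathlib

section
/- Let n ≥ 2, ε ∈ (0,1/2), c > 0, δ ∈ ℝ, p, q ∈ (0,1) with p > (q(1−2ε) − 4c(ε−δ))/(1+2ε). Consider a voter i in the majority class H₁ (|H₁| = n(1/2+ε), |H₂| = n(1/2−ε)), with edges to each other member of H₁ independently with probability p and to each member of H₂ independently with probability q. Let N_{i,1}, N_{i,2} be the number of observed majority and minority voters, and let the voter predict a₂ iff 2cn(ε−δ) + 1 ≤ N_{i,2} − N_{i,1}. Then for all sufficiently large n, P(voter i predicts a₂) ≤ exp(−2√(n−1)). -/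
open MeasureTheory ProbabilityTheory

set_option maxHeartbeats 1000000

/-- Quadratic upper bound on `exp` for `|x| ≤ 1`. -/
lemma exp_le_one_add_add_sq {x : ℝ} (hx : |x| ≤ 1) : Real.exp x ≤ 1 + x + x ^ 2 := by
  have h := Real.exp_bound hx (n := 2) (by norm_num)
  have hs : ∑ m ∈ Finset.range 2, x ^ m / m.factorial = 1 + x := by
    simp [Finset.sum_range_succ]
  rw [hs] at h
  have h1 := (abs_sub_le_iff.1 h).1
  have hx2 : |x| ^ 2 = x ^ 2 := sq_abs x
  rw [hx2] at h1
  norm_num [Nat.factorial] at h1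
  nlinarith [sq_nonneg x]

/-- The exponential moment sum of a binomial pmf. -/
lemma binom_mgf (M : ℕ) {r x : ℝ} (hr0 : 0 ≤ r) (hr1 : r ≤ 1) (hx : 0 ≤ x) :
    ∑' k : ℕ, ENNReal.ofReal (((M.choose k : ℝ) * r ^ k * (1 - r) ^ (M - k)) * x ^ k)
      = ENNReal.ofReal ((1 - r + r * x) ^ M) := by
  have h0 : ∀ k ∉ Finset.range (M + 1),
      ENNReal.ofReal (((M.choose k : ℝ) * r ^ k * (1 - r) ^ (M - k)) * x ^ k) = 0 := by
    intro k hk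
    have hMk : M < k := by simpa using hk
    rw [Nat.choose_eq_zero_of_lt hMk]
    simp
  rw [tsum_eq_sum h0, ← ENNReal.ofReal_sum_of_nonneg]
  · congr 1
    have hco : (1 - r + r * x) = r * x + (1 - r) := by ring
    rw [hco, add_pow]
    refine Finset.sum_congr rfl fun k hk => by ring
  · intro k _
    have h1r : (0:ℝ) ≤ 1 - r := by linarith
    exact mul_nonneg (mul_nonneg (mul_nonneg (by positivity) (pow_nonneg hr0 _))
      (pow_nonneg h1r _)) (pow_nonneg hx _)


/-- Clean-context final real inequality. -/
lemma final_bound (p q γ t a : ℝ) (n M1 M2 : ℕ)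
    (hp0 : 0 < p) (hp1 : p < 1) (hq0 : 0 < q) (hq1 : q < 1)
    (ht0 : 0 < t) (ht1 : t ≤ 1) (hγ : 0 < γ) (htγ : t ≤ γ/2)
    (hbound : -a - (M1:ℝ)*p + (M2:ℝ)*q ≤ -γ*(n:ℝ))
    (hMn : (M1:ℝ)*p + (M2:ℝ)*q ≤ (n:ℝ))
    (hn1 : 1 ≤ (n:ℝ))
    (hsqrt : 4/(t*γ) ≤ Real.sqrt ((n:ℝ)-1)) :
    Real.exp (-(t*a)) * (1 - p + p * Real.exp (-t)) ^ M1
      * (1 - q + q * Real.exp t) ^ M2 ≤ Real.exp (-2 * Real.sqrt ((n:ℝ) - 1)) := by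
  have htγpos : 0 < t * γ := mul_pos ht0 hγ
  have hA1 : (0:ℝ) < 1 - p + p * Real.exp (-t) := by
    have := Real.exp_pos (-t); nlinarith
  have hA2 : (0:ℝ) < 1 - q + q * Real.exp t := by
    have := Real.exp_pos t; nlinarith
  have hs0 : (0:ℝ) ≤ Real.sqrt ((n:ℝ) - 1) := Real.sqrt_nonneg _
  have hssq : Real.sqrt ((n:ℝ) - 1) * Real.sqrt ((n:ℝ) - 1) = (n:ℝ) - 1 :=
    Real.mul_self_sqrt (by linarith)
  have hb1 : (1 - p + p * Real.exp (-t)) ≤ Real.exp (p * (Real.exp (-t) - 1)) := by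
    have := Real.add_one_le_exp (p * (Real.exp (-t) - 1)); linarith
  have hb2 : (1 - q + q * Real.exp t) ≤ Real.exp (q * (Real.exp t - 1)) := by
    have := Real.add_one_le_exp (q * (Real.exp t - 1)); linarith
  have hpow1 : (1 - p + p * Real.exp (-t)) ^ M1
      ≤ Real.exp ((M1:ℝ) * (p * (Real.exp (-t) - 1))) := by
    rw [Real.exp_nat_mul]
    exact pow_le_pow_left₀ hA1.le hb1 _
  have hpow2 : (1 - q + q * Real.exp t) ^ M2
      ≤ Real.exp ((M2:ℝ) * (q * (Real.exp t - 1))) := by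
    rw [Real.exp_nat_mul]
    exact pow_le_pow_left₀ hA2.le hb2 _
  have hprod : Real.exp (-(t*a)) * (1 - p + p * Real.exp (-t)) ^ M1
      * (1 - q + q * Real.exp t) ^ M2
      ≤ Real.exp (-(t*a) + (M1:ℝ) * (p * (Real.exp (-t) - 1))
          + (M2:ℝ) * (q * (Real.exp t - 1))) := by
    rw [Real.exp_add, Real.exp_add]
    have h1 : (0:ℝ) ≤ Real.exp (-(t*a)) := Real.exp_nonneg _
    have h3 : (0:ℝ) ≤ (1 - q + q * Real.exp t) ^ M2 := pow_nonneg hA2.le _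
    calc Real.exp (-(t*a)) * (1 - p + p * Real.exp (-t)) ^ M1
          * (1 - q + q * Real.exp t) ^ M2
        ≤ Real.exp (-(t*a)) * Real.exp ((M1:ℝ) * (p * (Real.exp (-t) - 1)))
          * (1 - q + q * Real.exp t) ^ M2 :=
          mul_le_mul_of_nonneg_right (mul_le_mul_of_nonneg_left hpow1 h1) h3
      _ ≤ Real.exp (-(t*a)) * Real.exp ((M1:ℝ) * (p * (Real.exp (-t) - 1)))
          * Real.exp ((M2:ℝ) * (q * (Real.exp t - 1))) := by
          exact mul_le_mul_of_nonneg_left hpow2 (by positivity)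
  refine le_trans hprod (Real.exp_le_exp.2 ?_)
  have habs_t : |t| ≤ 1 := by rw [abs_of_nonneg ht0.le]; exact ht1
  have habs_nt : |(-t)| ≤ 1 := by rw [abs_neg]; exact habs_t
  have he1 : Real.exp (-t) - 1 ≤ -t + t^2 := by
    have := exp_le_one_add_add_sq habs_nt; nlinarith
  have he2 : Real.exp t - 1 ≤ t + t^2 := by
    have := exp_le_one_add_add_sq habs_t; linarith
  have hM1nn : (0:ℝ) ≤ (M1:ℝ) := Nat.cast_nonneg _
  have hM2nn : (0:ℝ) ≤ (M2:ℝ) := Nat.cast_nonneg _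
  have hstep1 : (M1:ℝ) * (p * (Real.exp (-t) - 1)) ≤ (M1:ℝ) * (p * (-t + t^2)) :=
    mul_le_mul_of_nonneg_left (mul_le_mul_of_nonneg_left he1 hp0.le) hM1nn
  have hstep2 : (M2:ℝ) * (q * (Real.exp t - 1)) ≤ (M2:ℝ) * (q * (t + t^2)) :=
    mul_le_mul_of_nonneg_left (mul_le_mul_of_nonneg_left he2 hq0.le) hM2nn
  have hlin : -(t*a) + (M1:ℝ) * (p * (-t + t^2)) + (M2:ℝ) * (q * (t + t^2))
      ≤ -(t * γ * n) + t^2 * n := by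
    nlinarith [mul_le_mul_of_nonneg_left hbound ht0.le,
      mul_le_mul_of_nonneg_left hMn (sq_nonneg t)]
  have hquad : -(t * γ * n) + t^2 * n ≤ -(2 * Real.sqrt ((n:ℝ) - 1)) := by
    have h4 : 4 ≤ Real.sqrt ((n:ℝ) - 1) * (t*γ) := (div_le_iff₀ htγpos).mp hsqrt
    have htt : t^2 * (n:ℝ) ≤ t * (γ/2) * (n:ℝ) := by
      apply mul_le_mul_of_nonneg_right _ (by linarith : (0:ℝ) ≤ (n:ℝ))
      nlinarith
    nlinarith [mul_le_mul_of_nonneg_left h4 hs0, hssq]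
  calc -(t*a) + (M1:ℝ) * (p * (Real.exp (-t) - 1)) + (M2:ℝ) * (q * (Real.exp t - 1))
      ≤ -(t*a) + (M1:ℝ) * (p * (-t + t^2)) + (M2:ℝ) * (q * (t + t^2)) := by linarith
    _ ≤ -(t * γ * n) + t^2 * n := hlin
    _ ≤ -(2 * Real.sqrt ((n:ℝ) - 1)) := hquad
    _ = -2 * Real.sqrt ((n:ℝ) - 1) := by ring

/-- Influential media, majority voter, low-surprise case: if
p > (q(1−2ε) − 4c(ε−δ))/(1+2ε), then for all sufficiently large n, a majority voter
(with N_{i,1} ~ Binomial(n(1/2+ε)−1, p), N_{i,2} ~ Binomial(n(1/2−ε), q) independent,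
predicting a₂ iff N_{i,2} − N_{i,1} ≥ 2cn(ε−δ) + 1) predicts a₂ with probability at
most exp(−2√(n−1)). -/
theorem majority_voter_unsurprised (ε c δ p q : ℝ)
    (hε : ε ∈ Set.Ioo (0:ℝ) (1/2)) (hc : 0 < c)
    (hp : p ∈ Set.Ioo (0:ℝ) 1) (hq : q ∈ Set.Ioo (0:ℝ) 1)
    (hcond : p > (q * (1 - 2*ε) - 4*c*(ε - δ)) / (1 + 2*ε)) :
    ∃ n₀ : ℕ, 2 ≤ n₀ ∧ ∀ n : ℕ, n₀ ≤ n → ∀ m1 m2 : ℕ, 1 ≤ m1 →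
      (m1 : ℝ) = n * (1/2 + ε) → (m2 : ℝ) = n * (1/2 - ε) →
      ∀ (Ω : Type) [MeasurableSpace Ω] (μ : Measure Ω), IsProbabilityMeasure μ →
      ∀ N1 N2 : Ω → ℕ, Measurable N1 → Measurable N2 →
      (∀ k : ℕ, μ {ω | N1 ω = k} =
        ENNReal.ofReal ((m1 - 1).choose k * p ^ k * (1 - p) ^ (m1 - 1 - k))) →
      (∀ k : ℕ, μ {ω | N2 ω = k} =
        ENNReal.ofReal (m2.choose k * q ^ k * (1 - q) ^ (m2 - k))) →
      IndepFun N1 N2 μ →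
      μ {ω | 2*c*(n : ℝ)*(ε - δ) + 1 ≤ (N2 ω : ℝ) - (N1 ω : ℝ)} ≤
        ENNReal.ofReal (Real.exp (-2 * Real.sqrt ((n : ℝ) - 1))) := by
  obtain ⟨hε0, hε2⟩ := hε
  obtain ⟨hp0, hp1⟩ := hp
  obtain ⟨hq0, hq1⟩ := hq
  obtain ⟨γ, hγdef⟩ : ∃ γ : ℝ, γ = 2*c*(ε-δ) + (1/2+ε)*p - (1/2-ε)*q := ⟨_, rfl⟩
  have h2ε : (0:ℝ) < 1 + 2*ε := by linarith
  have hγ : 0 < γ := by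
    have h := (div_lt_iff₀ h2ε).mp hcond
    rw [hγdef]; nlinarith
  obtain ⟨t, htdef⟩ : ∃ t : ℝ, t = min (γ/2) 1 := ⟨_, rfl⟩
  have ht0 : 0 < t := htdef ▸ lt_min (by linarith) one_pos
  have ht1 : t ≤ 1 := htdef ▸ min_le_right _ _
  have htγ : t ≤ γ/2 := htdef ▸ min_le_left _ _
  have htγpos : 0 < t * γ := mul_pos ht0 hγ
  refine ⟨max 2 (⌈(4/(t*γ))^2⌉₊ + 1), le_max_left _ _, ?_⟩
  intro n hn m1 m2 hm1 hm1eq hm2eq Ω _ μ hμ N1 N2 hN1 hN2 hpmf1 hpmf2 hindep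
  -- notation
  set a : ℝ := 2*c*(n : ℝ)*(ε - δ) + 1 with hadef
  set f1 : ℕ → ℝ := fun k => ((m1 - 1).choose k : ℝ) * p ^ k * (1 - p) ^ (m1 - 1 - k) with hf1def
  set f2 : ℕ → ℝ := fun k => ((m2.choose k : ℕ) : ℝ) * q ^ k * (1 - q) ^ (m2 - k) with hf2def
  have hf1nn : ∀ k, 0 ≤ f1 k := by
    intro k
    have h1p : (0:ℝ) ≤ 1 - p := by linarith
    exact mul_nonneg (mul_nonneg (by positivity) (pow_nonneg hp0.le _)) (pow_nonneg h1p _)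
  have hf2nn : ∀ k, 0 ≤ f2 k := by
    intro k
    have h1q : (0:ℝ) ≤ 1 - q := by linarith
    exact mul_nonneg (mul_nonneg (by positivity) (pow_nonneg hq0.le _)) (pow_nonneg h1q _)
  have hpmf1' : ∀ k, μ (N1 ⁻¹' {k}) = ENNReal.ofReal (f1 k) := fun k => hpmf1 k
  have hpmf2' : ∀ k, μ (N2 ⁻¹' {k}) = ENNReal.ofReal (f2 k) := fun k => hpmf2 k
  have hu : ∑' k : ℕ, ENNReal.ofReal (f1 k * Real.exp (-(t * k)))
      = ENNReal.ofReal ((1 - p + p * Real.exp (-t)) ^ (m1 - 1)) := by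
    have hrw : ∀ k : ℕ, f1 k * Real.exp (-(t * k))
        = (((m1-1).choose k : ℝ) * p ^ k * (1 - p) ^ (m1 - 1 - k)) * (Real.exp (-t)) ^ k := by
      intro k
      have harg : -(t * (k:ℝ)) = (k:ℝ) * (-t) := by ring
      rw [harg, Real.exp_nat_mul]
    simp_rw [hrw]
    exact binom_mgf (m1 - 1) hp0.le hp1.le (Real.exp_pos _).le
  have hv : ∑' k : ℕ, ENNReal.ofReal (f2 k * Real.exp (t * k))
      = ENNReal.ofReal ((1 - q + q * Real.exp t) ^ m2) := by
    have hrw : ∀ k : ℕ, f2 k * Real.exp (t * k)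
        = ((m2.choose k : ℝ) * q ^ k * (1 - q) ^ (m2 - k)) * (Real.exp t) ^ k := by
      intro k
      have harg : t * (k:ℝ) = (k:ℝ) * t := by ring
      rw [harg, Real.exp_nat_mul]
    simp_rw [hrw]
    exact binom_mgf m2 hq0.le hq1.le (Real.exp_pos _).le
  clear_value a f1 f2
  set E : Set Ω := {ω | a ≤ (N2 ω : ℝ) - (N1 ω : ℝ)} with hEdef
  clear_value E
  -- covering by fibers
  have hcover : E ⊆ ⋃ kp : ℕ × ℕ, ((N1 ⁻¹' {kp.1}) ∩ (N2 ⁻¹' {kp.2}) ∩ E) := by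
    intro ω hω
    exact Set.mem_iUnion.2 ⟨(N1 ω, N2 ω), ⟨⟨rfl, rfl⟩, hω⟩⟩
  -- termwise bound
  have hterm : ∀ kp : ℕ × ℕ,
      μ ((N1 ⁻¹' {kp.1}) ∩ (N2 ⁻¹' {kp.2}) ∩ E) ≤
        ENNReal.ofReal (Real.exp (-(t*a))) *
          ENNReal.ofReal (f1 kp.1 * Real.exp (-(t * kp.1))) *
          ENNReal.ofReal (f2 kp.2 * Real.exp (t * kp.2)) := by
    rintro ⟨k1, k2⟩
    by_cases hcase : a ≤ (k2 : ℝ) - (k1 : ℝ)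
    · have hre : f1 k1 * f2 k2 ≤
          Real.exp (-(t*a)) * (f1 k1 * Real.exp (-(t * k1))) * (f2 k2 * Real.exp (t * k2)) := by
        have hE : Real.exp (-(t*a)) * Real.exp (-(t * (k1:ℝ))) * Real.exp (t * (k2:ℝ))
            = Real.exp (t * ((k2:ℝ) - k1 - a)) := by
          rw [← Real.exp_add, ← Real.exp_add]
          congr 1
          ring
        have h1 : 1 ≤ Real.exp (t * ((k2:ℝ) - k1 - a)) :=
          Real.one_le_exp (mul_nonneg ht0.le (by linarith))
        calc f1 k1 * f2 k2 = f1 k1 * f2 k2 * 1 := by ring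
          _ ≤ f1 k1 * f2 k2 * Real.exp (t * ((k2:ℝ) - k1 - a)) :=
              mul_le_mul_of_nonneg_left h1 (mul_nonneg (hf1nn k1) (hf2nn k2))
          _ = Real.exp (-(t*a)) * Real.exp (-(t * (k1:ℝ))) * Real.exp (t * (k2:ℝ))
              * (f1 k1 * f2 k2) := by rw [hE]; ring
          _ = _ := by ring
      calc μ ((N1 ⁻¹' {k1}) ∩ (N2 ⁻¹' {k2}) ∩ E)
          ≤ μ ((N1 ⁻¹' {k1}) ∩ (N2 ⁻¹' {k2})) := measure_mono Set.inter_subset_left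
        _ = μ (N1 ⁻¹' {k1}) * μ (N2 ⁻¹' {k2}) :=
            hindep.measure_inter_preimage_eq_mul _ _ (measurableSet_singleton _)
              (measurableSet_singleton _)
        _ = ENNReal.ofReal (f1 k1 * f2 k2) := by
            rw [hpmf1', hpmf2', ← ENNReal.ofReal_mul (hf1nn k1)]
        _ ≤ ENNReal.ofReal (Real.exp (-(t*a)) * (f1 k1 * Real.exp (-(t * k1)))
              * (f2 k2 * Real.exp (t * k2))) := ENNReal.ofReal_le_ofReal hre
        _ = _ := by
            rw [ENNReal.ofReal_mul (mul_nonneg (Real.exp_nonneg _)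
              (mul_nonneg (hf1nn k1) (Real.exp_nonneg _))), ENNReal.ofReal_mul (Real.exp_nonneg _)]
    · have hempty : (N1 ⁻¹' {k1}) ∩ (N2 ⁻¹' {k2}) ∩ E = ∅ := by
        ext ω
        simp only [Set.mem_inter_iff, Set.mem_preimage, Set.mem_singleton_iff, hEdef,
          Set.mem_setOf_eq, Set.mem_empty_iff_false, iff_false, not_and]
        rintro ⟨h1, h2⟩ h3
        rw [h1, h2] at h3
        exact hcase h3
      rw [hempty]
      simp
  -- sum the bound
  have hA1 : (0:ℝ) < 1 - p + p * Real.exp (-t) := by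
    have := Real.exp_pos (-t)
    nlinarith
  have hA2 : (0:ℝ) < 1 - q + q * Real.exp t := by
    have := Real.exp_pos t
    nlinarith
  -- the key real inequality
  have hM1 : ((m1 - 1 : ℕ) : ℝ) = (n : ℝ) * (1/2 + ε) - 1 := by
    rw [Nat.cast_sub hm1, hm1eq, Nat.cast_one]
  have hn2 : (2:ℕ) ≤ n := le_trans (le_max_left _ _) hn
  have hnK : ((4/(t*γ))^2 : ℝ) ≤ (n : ℝ) - 1 := by
    have h1 : ⌈(4/(t*γ))^2⌉₊ + 1 ≤ n := le_trans (le_max_right _ _) hn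
    have h2 : ((4/(t*γ))^2 : ℝ) ≤ (⌈(4/(t*γ))^2⌉₊ : ℝ) := Nat.le_ceil _
    have h3 : ((⌈(4/(t*γ))^2⌉₊ : ℕ) : ℝ) + 1 ≤ (n : ℝ) := by exact_mod_cast h1
    linarith
  have hsqrt : 4 / (t*γ) ≤ Real.sqrt ((n:ℝ) - 1) := by
    have h4 : (0:ℝ) ≤ 4 / (t*γ) := by positivity
    have := Real.sqrt_le_sqrt hnK
    rwa [Real.sqrt_sq h4] at this
  have hs0 : (0:ℝ) ≤ Real.sqrt ((n:ℝ) - 1) := Real.sqrt_nonneg _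
  have hssq : Real.sqrt ((n:ℝ) - 1) * Real.sqrt ((n:ℝ) - 1) = (n:ℝ) - 1 := by
    have hn1 : (0:ℝ) ≤ (n : ℝ) - 1 := by
      have : (1:ℝ) ≤ (n:ℝ) := by exact_mod_cast le_trans (by norm_num) hn2
      linarith
    exact Real.mul_self_sqrt hn1
  have hbound : -a - ((m1 - 1 : ℕ):ℝ)*p + ((m2:ℕ):ℝ)*q ≤ -γ*(n:ℝ) := by
    rw [hM1, hm2eq, hadef, hγdef]
    nlinarith
  have hMn : ((m1 - 1 : ℕ):ℝ)*p + ((m2:ℕ):ℝ)*q ≤ ((n:ℕ):ℝ) := by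
    rw [hM1, hm2eq]
    nlinarith
  have hn1 : (1:ℝ) ≤ (n:ℝ) := by exact_mod_cast le_trans (by norm_num) hn2
  have hreal := final_bound p q γ t a n (m1 - 1) m2 hp0 hp1 hq0 hq1 ht0 ht1 hγ htγ
    hbound hMn hn1 hsqrt
  -- put it together
  calc μ E ≤ μ (⋃ kp : ℕ × ℕ, ((N1 ⁻¹' {kp.1}) ∩ (N2 ⁻¹' {kp.2}) ∩ E)) := measure_mono hcover
    _ ≤ ∑' kp : ℕ × ℕ, μ ((N1 ⁻¹' {kp.1}) ∩ (N2 ⁻¹' {kp.2}) ∩ E) := measure_iUnion_le _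
    _ ≤ ∑' kp : ℕ × ℕ, ENNReal.ofReal (Real.exp (-(t*a))) *
          ENNReal.ofReal (f1 kp.1 * Real.exp (-(t * kp.1))) *
          ENNReal.ofReal (f2 kp.2 * Real.exp (t * kp.2)) := ENNReal.tsum_le_tsum hterm
    _ = ∑' k1 : ℕ, ∑' k2 : ℕ, ENNReal.ofReal (Real.exp (-(t*a))) *
          ENNReal.ofReal (f1 k1 * Real.exp (-(t * k1))) *
          ENNReal.ofReal (f2 k2 * Real.exp (t * k2)) :=
        ENNReal.tsum_prod (f := fun k1 k2 => ENNReal.ofReal (Real.exp (-(t*a))) *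
          ENNReal.ofReal (f1 k1 * Real.exp (-(t * k1))) *
          ENNReal.ofReal (f2 k2 * Real.exp (t * k2)))
    _ = (∑' k1 : ℕ, ENNReal.ofReal (Real.exp (-(t*a))) *
          ENNReal.ofReal (f1 k1 * Real.exp (-(t * k1)))) *
          ∑' k2 : ℕ, ENNReal.ofReal (f2 k2 * Real.exp (t * k2)) := by
        rw [← ENNReal.tsum_mul_right]
        exact tsum_congr fun k1 => ENNReal.tsum_mul_left
    _ = ENNReal.ofReal (Real.exp (-(t*a))) *
          (∑' k1 : ℕ, ENNReal.ofReal (f1 k1 * Real.exp (-(t * k1)))) *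
          ∑' k2 : ℕ, ENNReal.ofReal (f2 k2 * Real.exp (t * k2)) := by
        rw [ENNReal.tsum_mul_left]
    _ = ENNReal.ofReal (Real.exp (-(t*a))) *
          ENNReal.ofReal ((1 - p + p * Real.exp (-t)) ^ (m1 - 1)) *
          ENNReal.ofReal ((1 - q + q * Real.exp t) ^ m2) := by rw [hu, hv]
    _ = ENNReal.ofReal (Real.exp (-(t*a)) * (1 - p + p * Real.exp (-t)) ^ (m1 - 1)
          * (1 - q + q * Real.exp t) ^ m2) := by
        rw [ENNReal.ofReal_mul (mul_nonneg (Real.exp_nonneg _) (pow_nonneg hA1.le _)),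
          ENNReal.ofReal_mul (Real.exp_nonneg _)]
    _ ≤ ENNReal.ofReal (Real.exp (-2 * Real.sqrt ((n : ℝ) - 1))) :=
        ENNReal.ofReal_le_ofReal hreal
end

section
/- Under the same setup, if instead p < (q(1−2ε) − 4c(ε−δ))/(1+2ε), then for all sufficiently large n, P(voter i ∈ H₁ predicts a₂) ≥ 1 − 2·exp(−2√(n−1)). -/
/-!
A centred `Bin(m, p)` variable has the `m`-th power of a centred Bernoulli moment generating
function, so Hoeffding's lemma makes it sub-Gaussian with variance proxy `m / 4`. Hence each of
`N₁ ~ Bin(m₁ - 1, p)` and `N₂ ~ Bin(m₂, q)` strays by `t = (n - 1)^(3/4)` from its mean with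
probability at most `exp (-2t² / m) ≤ exp (-2√(n - 1))`. Off these two events
`N₂ - N₁ > m₂q - (m₁ - 1)p - 2t = Δn + 2cn(ε - δ) + p - 2t` with
`2Δ = (1 - 2ε)q - (1 + 2ε)p - 4c(ε - δ)`, which is positive exactly by the hypothesis on `p`;
since `t = o(n)`, this clears the threshold `2cn(ε - δ) + 1` for large `n`.
-/

open MeasureTheory ProbabilityTheory Filter Real
open scoped unitInterval NNReal

namespace ProbabilityTheory

lemma hasSubgaussianMGF_sub_bernoulliMeasure (p : I) :
    HasSubgaussianMGF (fun x => x - p) (1 / 4) Ber((1 : ℝ), 0, p) := by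
  have hmem : ∀ᵐ x ∂Ber((1 : ℝ), 0, p), x ∈ Set.Icc (0 : ℝ) 1 := by
    rw [ae_iff]
    exact bernoulliMeasure_apply_of_notMem_of_notMem p measurableSet_Icc.compl
      (by norm_num) (by norm_num)
  convert hasSubgaussianMGF_of_mem_Icc aemeasurable_id hmem using 2
  · simp [integral_bernoulliMeasure]
  · ext; norm_num

lemma mgf_sub_bernoulliMeasure (p : I) (t : ℝ) :
    mgf (fun x => x - p) Ber((1 : ℝ), 0, p) t = exp (-(t * p)) * (p * exp t + (1 - p)) := by
  rw [mgf, integral_bernoulliMeasure, smul_eq_mul, smul_eq_mul, mul_sub, exp_sub, zero_sub,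
    mul_neg, mul_one, exp_neg]
  field_simp

lemma mgf_sub_map_cast_binomial (n : ℕ) (p : I) (t : ℝ) :
    mgf (fun x => x - n * p) Bin(ℝ, n, p) t =
      mgf (fun x => x - p) Ber((1 : ℝ), 0, p) t ^ n := by
  rw [mgf, integral_map_cast_binomial, mgf_sub_bernoulliMeasure, mul_pow, add_pow,
    ← Nat.range_succ_eq_Iic, Finset.mul_sum]
  refine Finset.sum_congr rfl fun k hk => ?_
  rw [smul_eq_mul, mul_sub, exp_sub, ← exp_nat_mul, mul_pow, ← exp_nat_mul, mul_neg, exp_neg,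
    div_eq_mul_inv]
  ring_nf

lemma hasSubgaussianMGF_sub_map_cast_binomial (n : ℕ) (p : I) :
    HasSubgaussianMGF (fun x => x - n * p) (n / 4) Bin(ℝ, n, p) where
  integrable_exp_mul _ := integrable_map_cast_binomial _
  mgf_le t := by
    rw [mgf_sub_map_cast_binomial]
    calc mgf (fun x => x - p) Ber((1 : ℝ), 0, p) t ^ n
        ≤ exp ((1 / 4 : ℝ≥0) * t ^ 2 / 2) ^ n :=
          pow_le_pow_left₀ mgf_nonneg ((hasSubgaussianMGF_sub_bernoulliMeasure p).mgf_le t) n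
      _ = exp ((n / 4 : ℝ≥0) * t ^ 2 / 2) := by
          rw [← exp_nat_mul]; push_cast; ring_nf

lemma hasLaw_binomial_of_measure_singleton {Ω : Type*} [MeasurableSpace Ω] {μ : Measure Ω}
    {N : Ω → ℕ} (hN : Measurable N) {n : ℕ} {p : I}
    (h : ∀ k : ℕ, μ {ω | N ω = k} = ENNReal.ofReal (n.choose k * p ^ k * (1 - p) ^ (n - k))) :
    HasLaw N Bin(n, p) μ where
  aemeasurable := hN.aemeasurable
  map_eq := Measure.ext_of_singleton fun k => by
    rw [Measure.map_apply hN (measurableSet_singleton k), binomial_singleton]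
    exact h k

section BinomialTail

variable {Ω : Type*} [MeasurableSpace Ω] {μ : Measure Ω} {N : Ω → ℕ} {n : ℕ} {p : I}

lemma HasLaw.hasSubgaussianMGF_sub_binomial (hN : HasLaw N Bin(n, p) μ) :
    HasSubgaussianMGF (fun ω => (N ω : ℝ) - n * p) (n / 4) μ :=
  have hcast : HasLaw (fun ω => (N ω : ℝ)) Bin(ℝ, n, p) μ :=
    HasLaw.comp ⟨measurable_from_nat.aemeasurable, rfl⟩ hN
  HasSubgaussianMGF.of_map (X := fun x => x - n * p) hcast.aemeasurable
    (hcast.map_eq ▸ hasSubgaussianMGF_sub_map_cast_binomial n p)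

lemma HasLaw.measureReal_binomial_upper_tail_le (hN : HasLaw N Bin(n, p) μ) {t : ℝ}
    (ht : 0 ≤ t) :
    μ.real {ω | t ≤ N ω - n * p} ≤ exp (-2 * t ^ 2 / n) := by
  convert hN.hasSubgaussianMGF_sub_binomial.measure_ge_le ht using 2
  push_cast; ring

lemma HasLaw.measureReal_binomial_lower_tail_le (hN : HasLaw N Bin(n, p) μ) {t : ℝ}
    (ht : 0 ≤ t) :
    μ.real {ω | t ≤ n * p - N ω} ≤ exp (-2 * t ^ 2 / n) := by
  convert hN.hasSubgaussianMGF_sub_binomial.neg.measure_ge_le ht using 2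
  · simp
  · push_cast; ring

end BinomialTail

end ProbabilityTheory

lemma eventually_two_mul_rpow_add_one_le_mul {a Δ : ℝ} (ha₀ : 0 ≤ a) (ha₁ : a < 1)
    (hΔ : 0 < Δ) : ∀ᶠ x : ℝ in atTop, 2 * x ^ a + 1 ≤ Δ * x := by
  filter_upwards [(tendsto_rpow_neg_atTop (sub_pos.2 ha₁)).eventually
    (gt_mem_nhds (by positivity : 0 < Δ / 3)), eventually_ge_atTop 1] with x hsmall hx
  have hsplit : x ^ a = x * x ^ (-(1 - a)) := by
    rw [mul_comm, ← rpow_add_one (by linarith : x ≠ 0)]; ring_nf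
  have hone : 1 ≤ x ^ a := one_le_rpow hx ha₀
  nlinarith

lemma eventually_two_mul_rpow_sub_one_add_one_le_mul {a Δ : ℝ} (ha₀ : 0 ≤ a) (ha₁ : a < 1)
    (hΔ : 0 < Δ) : ∀ᶠ n : ℕ in atTop, 2 * ((n : ℝ) - 1) ^ a + 1 ≤ Δ * n := by
  have hlim : Tendsto (fun n : ℕ => (n : ℝ) - 1) atTop atTop :=
    tendsto_atTop_add_const_right _ _ tendsto_natCast_atTop_atTop
  filter_upwards [hlim.eventually (eventually_two_mul_rpow_add_one_le_mul ha₀ ha₁ hΔ)] with n hn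
  linarith

lemma exp_neg_two_mul_rpow_sq_div_le {m z : ℝ} (hm : 0 < m) (hmz : m ≤ z) :
    exp (-2 * (z ^ (3 / 4 : ℝ)) ^ 2 / m) ≤ exp (-2 * √z) := by
  have hz : 0 ≤ z := hm.le.trans hmz
  have hsq : (z ^ (3 / 4 : ℝ)) ^ 2 = z * √z := by
    rw [← rpow_natCast, ← rpow_mul hz, sqrt_eq_rpow, ← rpow_one_add' hz (by norm_num)]
    norm_num
  rw [exp_le_exp, hsq, div_le_iff₀ hm]
  nlinarith [sqrt_nonneg z]

lemma one_sub_add_le_measureReal_of_compl_union_subset {Ω : Type*} [MeasurableSpace Ω]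
    {μ : Measure Ω} [IsProbabilityMeasure μ] {A B T : Set Ω} {a b : ℝ}
    (hA : μ.real A ≤ a) (hB : μ.real B ≤ b) (hT : (A ∪ B)ᶜ ⊆ T) :
    1 - (a + b) ≤ μ.real T := by
  have hcover : Set.univ ⊆ T ∪ (A ∪ B) := fun ω _ => by
    by_cases h : ω ∈ A ∪ B
    · exact Or.inr h
    · exact Or.inl (hT h)
  have hT_union := (measureReal_mono (μ := μ) hcover).trans (measureReal_union_le T (A ∪ B))
  rw [probReal_univ] at hT_union
  linarith [measureReal_union_le (μ := μ) A B]

theorem majority_voter_surprised_general (ε c δ p q : ℝ)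
    (hε : ε ∈ Set.Ioo (0:ℝ) (1/2))
    (hp : p ∈ Set.Ioo (0:ℝ) 1) (hq : q ∈ Set.Ioo (0:ℝ) 1)
    (hcond : p < (q * (1 - 2*ε) - 4*c*(ε - δ)) / (1 + 2*ε)) :
    ∃ n₀ : ℕ, 2 ≤ n₀ ∧ ∀ n : ℕ, n₀ ≤ n → ∀ m1 m2 : ℕ, 1 ≤ m1 →
      (m1 : ℝ) = n * (1/2 + ε) → (m2 : ℝ) = n * (1/2 - ε) →
      ∀ (Ω : Type) [MeasurableSpace Ω] (μ : Measure Ω), IsProbabilityMeasure μ →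
      ∀ N1 N2 : Ω → ℕ, Measurable N1 → Measurable N2 →
      (∀ k : ℕ, μ {ω | N1 ω = k} =
        ENNReal.ofReal ((m1 - 1).choose k * p ^ k * (1 - p) ^ (m1 - 1 - k))) →
      (∀ k : ℕ, μ {ω | N2 ω = k} =
        ENNReal.ofReal (m2.choose k * q ^ k * (1 - q) ^ (m2 - k))) →
      IndepFun N1 N2 μ →
      ENNReal.ofReal (1 - 2 * Real.exp (-2 * Real.sqrt ((n : ℝ) - 1))) ≤
        μ {ω | 2*c*(n : ℝ)*(ε - δ) + 1 ≤ (N2 ω : ℝ) - (N1 ω : ℝ)} := by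
  obtain ⟨hε0, hε1⟩ := hε
  set Δ := ((1 - 2 * ε) * q - (1 + 2 * ε) * p - 4 * c * (ε - δ)) / 2 with hΔ_def
  have hΔ : 0 < Δ := by
    rw [lt_div_iff₀ (by linarith)] at hcond
    linarith
  obtain ⟨n₁, hn₁⟩ := eventually_atTop.1
    (eventually_two_mul_rpow_sub_one_add_one_le_mul (a := 3 / 4) (by norm_num) (by norm_num) hΔ)
  refine ⟨max n₁ 2, le_max_right _ _, fun n hn m1 m2 hm1 hm1n hm2n Ω _ μ _ N1 N2 hN1 hN2
    hlaw1 hlaw2 _ => ?_⟩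
  have hn2 : (2 : ℝ) ≤ n := by exact_mod_cast le_of_max_le_right hn
  set t := ((n : ℝ) - 1) ^ (3 / 4 : ℝ)
  have ht : 0 ≤ t := rpow_nonneg (by linarith) _
  have hm1_cast : ((m1 - 1 : ℕ) : ℝ) = m1 - 1 := by rw [Nat.cast_sub hm1, Nat.cast_one]
  have hm1_pos : (0 : ℝ) < (m1 - 1 : ℕ) := by rw [hm1_cast, hm1n]; nlinarith
  have hm2_pos : (0 : ℝ) < m2 := by rw [hm2n]; nlinarith
  have hA := ((hasLaw_binomial_of_measure_singleton hN1 (p := ⟨p, hp.1.le, hp.2.le⟩) hlaw1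
    ).measureReal_binomial_upper_tail_le ht).trans
    (exp_neg_two_mul_rpow_sq_div_le hm1_pos (by rw [hm1_cast, hm1n]; nlinarith))
  have hB := ((hasLaw_binomial_of_measure_singleton hN2 (p := ⟨q, hq.1.le, hq.2.le⟩) hlaw2
    ).measureReal_binomial_lower_tail_le ht).trans
    (exp_neg_two_mul_rpow_sq_div_le hm2_pos (by rw [hm2n]; nlinarith))
  rw [← ofReal_measureReal, two_mul]
  refine ENNReal.ofReal_le_ofReal (one_sub_add_le_measureReal_of_compl_union_subset hA hB ?_)
  intro ω hω
  simp only [Set.compl_union, Set.mem_inter_iff, Set.mem_compl_iff, Set.mem_ofPred_eq,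
    not_le] at hω ⊢
  have hmargin : (m2 : ℝ) * q - (m1 - 1) * p = Δ * n + 2 * c * n * (ε - δ) + p := by
    rw [hm1n, hm2n, hΔ_def]; ring
  have hlarge := hn₁ n (le_of_max_le_left hn)
  simp only [hm1_cast] at hω
  linarith [hp.1]

/-- Influential media, majority voter, high-surprise case: if
p < (q(1−2ε) − 4c(ε−δ))/(1+2ε), then for all sufficiently large n, a majority voter
predicts a₂ with probability at least 1 − 2 exp(−2√(n−1)). -/
theorem majority_voter_surprised (ε c δ p q : ℝ)
    (hε : ε ∈ Set.Ioo (0:ℝ) (1/2)) (hc : 0 < c)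
    (hp : p ∈ Set.Ioo (0:ℝ) 1) (hq : q ∈ Set.Ioo (0:ℝ) 1)
    (hcond : p < (q * (1 - 2*ε) - 4*c*(ε - δ)) / (1 + 2*ε)) :
    ∃ n₀ : ℕ, 2 ≤ n₀ ∧ ∀ n : ℕ, n₀ ≤ n → ∀ m1 m2 : ℕ, 1 ≤ m1 →
      (m1 : ℝ) = n * (1/2 + ε) → (m2 : ℝ) = n * (1/2 - ε) →
      ∀ (Ω : Type) [MeasurableSpace Ω] (μ : Measure Ω), IsProbabilityMeasure μ →
      ∀ N1 N2 : Ω → ℕ, Measurable N1 → Measurable N2 →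
      (∀ k : ℕ, μ {ω | N1 ω = k} =
        ENNReal.ofReal ((m1 - 1).choose k * p ^ k * (1 - p) ^ (m1 - 1 - k))) →
      (∀ k : ℕ, μ {ω | N2 ω = k} =
        ENNReal.ofReal (m2.choose k * q ^ k * (1 - q) ^ (m2 - k))) →
      IndepFun N1 N2 μ →
      ENNReal.ofReal (1 - 2 * Real.exp (-2 * Real.sqrt ((n : ℝ) - 1))) ≤
        μ {ω | 2*c*(n : ℝ)*(ε - δ) + 1 ≤ (N2 ω : ℝ) - (N1 ω : ℝ)} :=
  majority_voter_surprised_general ε c δ p q hε hp hq hcond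
end

section
/- Let n ≥ 2, ε ∈ (0,1/2), c > 0, δ ∈ ℝ, p, q ∈ (0,1) with p < (q(1+2ε) + 4c(ε−δ))/(1−2ε). Consider a voter i in the minority class H₂ (|H₂| = n(1/2−ε)), with edges to each other member of H₂ independently with probability p and to each member of H₁ independently with probability q. The voter predicts a₂ iff N_{i,2} − N_{i,1} ≥ 2cn(ε−δ) − 1. Then for all sufficiently large n, P(voter i predicts a₂) ≤ exp(−2√(n−1)). -/
/-!
The threshold exceeds the mean of `N₂ - N₁` by `3γn + O(1)` for some `γ > 0`, so the event
forces `N₂` at least `γn` above its mean or `N₁` at least `γn` below its mean. Tilting the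
binomial mass function by `e^{±tk}` with a fixed `t ∈ (0, 1]` and using `e^t - 1 - t ≤ t²`
bounds each of these by `exp (-κn)` with `κ = tγ/2`, and `2 exp (-κn) ≤ exp (-2√(n - 1))`
once `n` is large.
-/

open MeasureTheory ProbabilityTheory Finset Filter

section Binomial

variable {Ω : Type*} [MeasurableSpace Ω] {μ : Measure Ω} {N : Ω → ℕ}

theorem measure_preimage_eq_sum_indicator_of_pmf (hN : Measurable N) {f : ℕ → ℝ}
    (hf : ∀ k, 0 ≤ f k) (hpmf : ∀ k, μ {ω | N ω = k} = ENNReal.ofReal (f k)) {M : ℕ}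
    (hsupp : ∀ k, M < k → f k = 0) (T : Set ℕ) :
    μ (N ⁻¹' T) = ENNReal.ofReal (∑ k ∈ range (M + 1), T.indicator f k) := by
  rw [← tsum_measure_preimage_singleton T.to_countable fun k _ => hN (measurableSet_singleton k),
    tsum_subtype T fun k => μ (N ⁻¹' {k}), tsum_eq_sum (s := range (M + 1)),
    ENNReal.ofReal_sum_of_nonneg fun k _ => Set.indicator_nonneg (fun k _ => hf k) k]
  · refine sum_congr rfl fun k _ => ?_
    by_cases hk : k ∈ T <;> simp [hk, ← hpmf, Set.preimage, eq_comm]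
  · intro k hk
    rw [mem_range, not_lt] at hk
    simp [Set.preimage, hpmf, hsupp k hk]

def binomialMass (M : ℕ) (x : ℝ) (k : ℕ) : ℝ :=
  M.choose k * x ^ k * (1 - x) ^ (M - k)

theorem binomialMass_nonneg {M : ℕ} {x : ℝ} (hx0 : 0 ≤ x) (hx1 : x ≤ 1) (k : ℕ) :
    0 ≤ binomialMass M x k := by
  unfold binomialMass
  have : 0 ≤ 1 - x := by linarith
  positivity

theorem binomialMass_eq_zero_of_lt {M k : ℕ} (x : ℝ) (hk : M < k) : binomialMass M x k = 0 := by
  simp [binomialMass, Nat.choose_eq_zero_of_lt hk]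

theorem measure_mul_le_mul_le_of_binomial (hN : Measurable N) {M : ℕ} {x : ℝ}
    (hx0 : 0 ≤ x) (hx1 : x ≤ 1)
    (hpmf : ∀ k, μ {ω | N ω = k} = ENNReal.ofReal (binomialMass M x k)) (θ a : ℝ) :
    μ {ω | θ * a ≤ θ * N ω} ≤
      ENNReal.ofReal (Real.exp (-(θ * a)) * (x * Real.exp θ + (1 - x)) ^ M) := by
  rw [← Set.preimage_ofPred_eq (p := fun k : ℕ => θ * a ≤ θ * k),
    measure_preimage_eq_sum_indicator_of_pmf hN (binomialMass_nonneg hx0 hx1) hpmf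
      (fun k => binomialMass_eq_zero_of_lt x)]
  refine ENNReal.ofReal_le_ofReal ?_
  calc ∑ k ∈ range (M + 1), {k : ℕ | θ * a ≤ θ * k}.indicator (binomialMass M x) k
      ≤ ∑ k ∈ range (M + 1), binomialMass M x k * Real.exp (θ * k - θ * a) := by
        refine sum_le_sum fun k _ => Set.indicator_apply_le' (fun hk => ?_) fun _ => ?_
        · exact le_mul_of_one_le_right (binomialMass_nonneg hx0 hx1 k)
            (Real.one_le_exp (sub_nonneg.2 hk))
        · exact mul_nonneg (binomialMass_nonneg hx0 hx1 k) (Real.exp_nonneg _)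
    _ = Real.exp (-(θ * a)) * (x * Real.exp θ + (1 - x)) ^ M := by
        rw [add_pow, mul_sum]
        refine sum_congr rfl fun k _ => ?_
        rw [binomialMass, mul_pow, ← Real.exp_nat_mul, Real.exp_sub, Real.exp_neg,
          mul_comm (k : ℝ) θ]
        field_simp

theorem exp_neg_mul_mul_pow_le {M : ℕ} {x : ℝ} (hx0 : 0 ≤ x) (hx1 : x ≤ 1) {θ : ℝ}
    (hθ : |θ| ≤ 1) (a : ℝ) :
    Real.exp (-(θ * a)) * (x * Real.exp θ + (1 - x)) ^ M ≤
      Real.exp (θ * (M * x - a) + M * x * θ ^ 2) := by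
  have hbase : x * Real.exp θ + (1 - x) ≤ Real.exp (x * (θ + θ ^ 2)) := by
    have h := (abs_le.1 (Real.abs_exp_sub_one_sub_id_le hθ)).2
    nlinarith [Real.add_one_le_exp (x * (θ + θ ^ 2))]
  have hbase0 : 0 ≤ x * Real.exp θ + (1 - x) := by
    have := Real.exp_nonneg θ
    nlinarith
  calc Real.exp (-(θ * a)) * (x * Real.exp θ + (1 - x)) ^ M
      ≤ Real.exp (-(θ * a)) * Real.exp (x * (θ + θ ^ 2)) ^ M := by gcongr
    _ = Real.exp (θ * (M * x - a) + M * x * θ ^ 2) := by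
        rw [← Real.exp_nat_mul, ← Real.exp_add]
        ring_nf

theorem measure_add_le_of_binomial (hN : Measurable N) {M : ℕ} {x : ℝ}
    (hx0 : 0 ≤ x) (hx1 : x ≤ 1)
    (hpmf : ∀ k, μ {ω | N ω = k} = ENNReal.ofReal (binomialMass M x k)) (s : ℝ) {t : ℝ}
    (ht0 : 0 ≤ t) (ht1 : t ≤ 1) :
    μ {ω | x * M + s ≤ N ω} ≤ ENNReal.ofReal (Real.exp (M * x * t ^ 2 - t * s)) := by
  calc μ {ω | x * M + s ≤ N ω} ≤ μ {ω | t * (x * M + s) ≤ t * N ω} :=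
        measure_mono fun ω hω => mul_le_mul_of_nonneg_left hω ht0
    _ ≤ _ := (measure_mul_le_mul_le_of_binomial hN hx0 hx1 hpmf t _).trans <|
        ENNReal.ofReal_le_ofReal <|
          (exp_neg_mul_mul_pow_le hx0 hx1 (abs_le.2 ⟨by linarith, ht1⟩) _).trans_eq (by ring_nf)

theorem measure_le_sub_of_binomial (hN : Measurable N) {M : ℕ} {x : ℝ}
    (hx0 : 0 ≤ x) (hx1 : x ≤ 1)
    (hpmf : ∀ k, μ {ω | N ω = k} = ENNReal.ofReal (binomialMass M x k)) (s : ℝ) {t : ℝ}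
    (ht0 : 0 ≤ t) (ht1 : t ≤ 1) :
    μ {ω | N ω ≤ x * M - s} ≤ ENNReal.ofReal (Real.exp (M * x * t ^ 2 - t * s)) := by
  calc μ {ω | N ω ≤ x * M - s} ≤ μ {ω | -t * (x * M - s) ≤ -t * N ω} :=
        measure_mono fun ω hω => mul_le_mul_of_nonpos_left hω (neg_nonpos.2 ht0)
    _ ≤ _ := (measure_mul_le_mul_le_of_binomial hN hx0 hx1 hpmf (-t) _).trans <|
        ENNReal.ofReal_le_ofReal <|
          (exp_neg_mul_mul_pow_le hx0 hx1 (by rwa [abs_neg, abs_of_nonneg ht0]) _).trans_eq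
            (by ring_nf)

end Binomial

theorem measure_le_sub_le_add_measure {Ω : Type*} [MeasurableSpace Ω] (μ : Measure Ω)
    (X Y : Ω → ℝ) {T u w : ℝ} (h : u - w ≤ T) :
    μ {ω | T ≤ X ω - Y ω} ≤ μ {ω | u ≤ X ω} + μ {ω | Y ω ≤ w} := by
  refine (measure_mono fun ω (hω : T ≤ X ω - Y ω) => ?_).trans (measure_union_le _ _)
  by_contra hω'
  simp only [Set.mem_union, Set.mem_ofPred_eq, not_or, not_le] at hω'
  linarith

theorem mul_sq_sub_mul_le_neg_half {M x n t γ : ℝ} (hMx : M * x ≤ n) (hn : 0 ≤ n)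
    (ht : 0 ≤ t) (htγ : t ≤ γ / 2) : M * x * t ^ 2 - t * (γ * n) ≤ -(t * γ / 2 * n) := by
  nlinarith [mul_le_mul_of_nonneg_right hMx (sq_nonneg t),
    mul_le_mul_of_nonneg_left (mul_le_mul_of_nonneg_left htγ ht) hn]

theorem eventually_two_mul_exp_neg_mul_le {κ : ℝ} (hκ : 0 < κ) :
    ∀ᶠ n : ℝ in atTop, 2 * Real.exp (-(κ * n)) ≤ Real.exp (-2 * √(n - 1)) := by
  filter_upwards [eventually_ge_atTop ((2 + 2 * (2 / κ)) / κ), eventually_ge_atTop 1]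
    with n hn hn1
  rw [div_le_iff₀ hκ] at hn
  have hsqrt : √(n - 1) ^ 2 = n - 1 := Real.sq_sqrt (by linarith)
  have amgm : 2 * √(n - 1) ≤ κ * n / 2 - κ / 2 + 2 / κ := by
    have := mul_nonneg hκ.le (sq_nonneg (√(n - 1) - 2 / κ))
    field_simp at this ⊢
    nlinarith
  calc 2 * Real.exp (-(κ * n)) = Real.exp (Real.log 2 + -(κ * n)) := by
        rw [Real.exp_add, Real.exp_log two_pos]
    _ ≤ Real.exp (-2 * √(n - 1)) := Real.exp_le_exp.2 (by linarith [Real.log_two_lt_d9])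

theorem minority_voter_unsurprised_general (ε c δ p q : ℝ)
    (hε : ε ∈ Set.Ioo (0:ℝ) (1/2))
    (hp : p ∈ Set.Ioo (0:ℝ) 1) (hq : q ∈ Set.Ioo (0:ℝ) 1)
    (hcond : p < (q * (1 + 2*ε) + 4*c*(ε - δ)) / (1 - 2*ε)) :
    ∃ n₀ : ℕ, 2 ≤ n₀ ∧ ∀ n : ℕ, n₀ ≤ n → ∀ m1 m2 : ℕ, 1 ≤ m2 →
      (m1 : ℝ) = n * (1/2 + ε) → (m2 : ℝ) = n * (1/2 - ε) →
      ∀ (Ω : Type) [MeasurableSpace Ω] (μ : Measure Ω), IsProbabilityMeasure μ →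
      ∀ N1 N2 : Ω → ℕ, Measurable N1 → Measurable N2 →
      (∀ k : ℕ, μ {ω | N1 ω = k} =
        ENNReal.ofReal (m1.choose k * q ^ k * (1 - q) ^ (m1 - k))) →
      (∀ k : ℕ, μ {ω | N2 ω = k} =
        ENNReal.ofReal ((m2 - 1).choose k * p ^ k * (1 - p) ^ (m2 - 1 - k))) →
      IndepFun N1 N2 μ →
      μ {ω | 2*c*(n : ℝ)*(ε - δ) - 1 ≤ (N2 ω : ℝ) - (N1 ω : ℝ)} ≤
        ENNReal.ofReal (Real.exp (-2 * Real.sqrt ((n : ℝ) - 1))) := by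
  obtain ⟨hε0, hε1⟩ := hε
  rw [lt_div_iff₀ (by linarith)] at hcond
  set γ := (q * (1/2 + ε) + 2 * c * (ε - δ) - p * (1/2 - ε)) / 3 with hγ_def
  have hγ : 0 < γ := by linarith
  set t := min (γ / 2) 1
  have ht : 0 < t := lt_min (half_pos hγ) one_pos
  have hκ : 0 < t * γ / 2 := by positivity
  obtain ⟨n₀, hn₀⟩ := eventually_atTop.1 <|
    (tendsto_natCast_atTop_atTop (R := ℝ)).eventually <|
      (eventually_ge_atTop γ⁻¹).and (eventually_two_mul_exp_neg_mul_le hκ)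
  refine ⟨max n₀ 2, le_max_right _ _, fun n hn m1 m2 hm2 hm1_eq hm2_eq Ω _ μ _ N1 N2 hN1 hN2
    hpmf1 hpmf2 _ => ?_⟩
  obtain ⟨hγn, hexp⟩ := hn₀ n (le_of_max_le_left hn)
  rw [inv_le_iff_one_le_mul₀ hγ] at hγn
  have hm2_sub : ((m2 - 1 : ℕ) : ℝ) = n * (1/2 - ε) - 1 := by push_cast [hm2]; rw [hm2_eq]
  have exponent_le (M x : ℝ) (hMx : M * x ≤ n) :
      Real.exp (M * x * t ^ 2 - t * (γ * n)) ≤ Real.exp (-(t * γ / 2 * n)) :=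
    Real.exp_le_exp.2 (mul_sq_sub_mul_le_neg_half hMx n.cast_nonneg ht.le (min_le_left _ _))
  calc μ {ω | 2 * c * (n : ℝ) * (ε - δ) - 1 ≤ (N2 ω : ℝ) - (N1 ω : ℝ)}
      ≤ μ {ω | p * ((m2 - 1 : ℕ) : ℝ) + γ * n ≤ N2 ω} +
          μ {ω | N1 ω ≤ q * m1 - γ * n} := by
        refine measure_le_sub_le_add_measure μ _ _ ?_
        rw [hm2_sub, hm1_eq]
        linarith [hp.1, show 3 * (γ * n) = q * (n * (1/2 + ε)) + 2 * c * n * (ε - δ)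
          - p * (n * (1/2 - ε)) by rw [hγ_def]; ring]
    _ ≤ ENNReal.ofReal (Real.exp (-(t * γ / 2 * n))) +
          ENNReal.ofReal (Real.exp (-(t * γ / 2 * n))) := by
        gcongr
        · refine (measure_add_le_of_binomial hN2 hp.1.le hp.2.le hpmf2 _ ht.le
            (min_le_right _ _)).trans (ENNReal.ofReal_le_ofReal (exponent_le _ _ ?_))
          rw [hm2_sub]; nlinarith [hp.1, hp.2]
        · refine (measure_le_sub_of_binomial hN1 hq.1.le hq.2.le hpmf1 _ ht.le
            (min_le_right _ _)).trans (ENNReal.ofReal_le_ofReal (exponent_le _ _ ?_))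
          rw [hm1_eq]; nlinarith [hq.1, hq.2]
    _ = ENNReal.ofReal (2 * Real.exp (-(t * γ / 2 * n))) := by
        rw [← ENNReal.ofReal_add (by positivity) (by positivity), two_mul]
    _ ≤ ENNReal.ofReal (Real.exp (-2 * Real.sqrt ((n : ℝ) - 1))) :=
        ENNReal.ofReal_le_ofReal hexp

/-- Influential media, minority voter, low-surprise case: if
p < (q(1+2ε) + 4c(ε−δ))/(1−2ε), then for all sufficiently large n, a minority voter
(with N_{i,1} ~ Binomial(n(1/2+ε), q), N_{i,2} ~ Binomial(n(1/2−ε)−1, p) independent,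
predicting a₂ iff N_{i,2} − N_{i,1} ≥ 2cn(ε−δ) − 1) predicts a₂ with probability at
most exp(−2√(n−1)). -/
theorem minority_voter_unsurprised (ε c δ p q : ℝ)
    (hε : ε ∈ Set.Ioo (0:ℝ) (1/2)) (hc : 0 < c)
    (hp : p ∈ Set.Ioo (0:ℝ) 1) (hq : q ∈ Set.Ioo (0:ℝ) 1)
    (hcond : p < (q * (1 + 2*ε) + 4*c*(ε - δ)) / (1 - 2*ε)) :
    ∃ n₀ : ℕ, 2 ≤ n₀ ∧ ∀ n : ℕ, n₀ ≤ n → ∀ m1 m2 : ℕ, 1 ≤ m2 →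
      (m1 : ℝ) = n * (1/2 + ε) → (m2 : ℝ) = n * (1/2 - ε) →
      ∀ (Ω : Type) [MeasurableSpace Ω] (μ : Measure Ω), IsProbabilityMeasure μ →
      ∀ N1 N2 : Ω → ℕ, Measurable N1 → Measurable N2 →
      (∀ k : ℕ, μ {ω | N1 ω = k} =
        ENNReal.ofReal (m1.choose k * q ^ k * (1 - q) ^ (m1 - k))) →
      (∀ k : ℕ, μ {ω | N2 ω = k} =
        ENNReal.ofReal ((m2 - 1).choose k * p ^ k * (1 - p) ^ (m2 - 1 - k))) →
      IndepFun N1 N2 μ →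
      μ {ω | 2*c*(n : ℝ)*(ε - δ) - 1 ≤ (N2 ω : ℝ) - (N1 ω : ℝ)} ≤
        ENNReal.ofReal (Real.exp (-2 * Real.sqrt ((n : ℝ) - 1))) :=
  minority_voter_unsurprised_general ε c δ p q hε hp hq hcond
end

section
/- If p ∈ ((q(1−2ε) − 4c(ε−δ))/(1+2ε), (q(1+2ε) + 4c(ε−δ))/(1−2ε)), then for sufficiently large n the probability that ALL n voters predict the true winner a₁ is at least 1 − n·exp(−2√(n−1)). -/
/-!
Write `α₁, α₂` for the two expressions of `vote_margins_pos`, positive exactly when `p` lies in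
the given interval. The expected vote gap seen by a voter of either class lies below its
threshold by about `n α / 2`, so a voter errs only if one of its two binomial counts deviates
from its mean by `β n / 8`, where `β = min α₁ α₂ 1`. The Chernoff bound, with
`exp s ≤ 1 + s + s²` for `|s| ≤ 1`, bounds each such deviation by `exp (-β² n / 256)`, and for
large `n` twice this is at most `exp (-2 √(n - 1))`. A union bound over the `n` voters finishes.
-/

open MeasureTheory ProbabilityTheory Real Filter

def HasBinomialPMF {Ω : Type*} [MeasurableSpace Ω] (μ : Measure Ω) (X : Ω → ℕ) (m : ℕ)
    (r : ℝ) : Prop :=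
  ∀ k : ℕ, μ {ω | X ω = k} = ENNReal.ofReal (m.choose k * r ^ k * (1 - r) ^ (m - k))

lemma sum_exp_mul_binomial (m : ℕ) (r s : ℝ) :
    ∑ k ∈ Finset.range (m + 1), exp (s * k) * (m.choose k * r ^ k * (1 - r) ^ (m - k)) =
      (1 - r + r * exp s) ^ m := by
  rw [add_comm (1 - r), add_pow]
  refine Finset.sum_congr rfl fun k _ => ?_
  rw [mul_pow, ← exp_nat_mul, mul_comm s]
  ring

lemma one_sub_add_mul_exp_le (r s : ℝ) (hr : 0 ≤ r) (hs : |s| ≤ 1) :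
    1 - r + r * exp s ≤ exp (r * (s + s ^ 2)) := by
  have h := (abs_le.1 (abs_exp_sub_one_sub_id_le hs)).2
  calc 1 - r + r * exp s ≤ r * (s + s ^ 2) + 1 := by nlinarith
    _ ≤ exp (r * (s + s ^ 2)) := add_one_le_exp _

namespace HasBinomialPMF

variable {Ω : Type*} [MeasurableSpace Ω] {μ : Measure Ω} {X : Ω → ℕ} {m : ℕ} {r : ℝ}

/-- Chernoff bound; a negative `s` gives the lower tail. -/
lemma measure_mul_le_mul_le (hX : HasBinomialPMF μ X m r) (hr0 : 0 ≤ r) (hr1 : r ≤ 1)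
    (s v : ℝ) :
    μ {ω | s * v ≤ s * X ω} ≤ ENNReal.ofReal (exp (-(s * v)) * (1 - r + r * exp s) ^ m) := by
  set w : ℕ → ℝ := fun k => exp (s * k - s * v) * (m.choose k * r ^ k * (1 - r) ^ (m - k))
  have hw : ∀ k, 0 ≤ w k := fun k => by have := sub_nonneg.2 hr1; positivity
  have hsplit : ∀ k, μ {ω | X ω = k ∧ s * v ≤ s * k} ≤ ENNReal.ofReal (w k) := by
    intro k
    by_cases hk : s * v ≤ s * k
    · simp only [hk, and_true, hX k]
      exact ENNReal.ofReal_le_ofReal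
        (le_mul_of_one_le_left (by positivity) (one_le_exp (sub_nonneg.2 hk)))
    · simp [hk]
  have hvanish : ∀ k ∉ Finset.range (m + 1), ENNReal.ofReal (w k) = 0 := by
    intro k hk
    have hmk : m < k := by simp only [Finset.mem_range] at hk; omega
    simp [w, Nat.choose_eq_zero_of_lt hmk]
  calc μ {ω | s * v ≤ s * X ω}
      ≤ μ (⋃ k : ℕ, {ω | X ω = k ∧ s * v ≤ s * k}) :=
        measure_mono fun ω hω => Set.mem_iUnion.2 ⟨X ω, rfl, hω⟩
    _ ≤ ∑' k, ENNReal.ofReal (w k) := (measure_iUnion_le _).trans (ENNReal.tsum_le_tsum hsplit)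
    _ = ENNReal.ofReal (∑ k ∈ Finset.range (m + 1), w k) := by
        rw [tsum_eq_sum hvanish, ENNReal.ofReal_sum_of_nonneg fun k _ => hw k]
    _ = ENNReal.ofReal (exp (-(s * v)) * (1 - r + r * exp s) ^ m) := by
        rw [← sum_exp_mul_binomial, Finset.mul_sum]
        refine congrArg _ (Finset.sum_congr rfl fun k _ => ?_)
        simp only [w, sub_eq_add_neg, exp_add]
        ring

lemma measure_mul_le_mul_le_exp (hX : HasBinomialPMF μ X m r) (hr0 : 0 ≤ r) (hr1 : r ≤ 1)
    {s : ℝ} (hs : |s| ≤ 1) (v : ℝ) :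
    μ {ω | s * v ≤ s * X ω} ≤ ENNReal.ofReal (exp (-(s * v) + m * r * (s + s ^ 2))) := by
  refine (hX.measure_mul_le_mul_le hr0 hr1 s v).trans (ENNReal.ofReal_le_ofReal ?_)
  have hbase : 0 ≤ 1 - r + r * exp s := by nlinarith [exp_pos s]
  calc exp (-(s * v)) * (1 - r + r * exp s) ^ m
      ≤ exp (-(s * v)) * exp (r * (s + s ^ 2)) ^ m := by
        gcongr
        exact one_sub_add_mul_exp_le r s hr0 hs
    _ = exp (-(s * v) + m * r * (s + s ^ 2)) := by
        rw [← exp_nat_mul, ← exp_add, mul_assoc]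

variable {N θ : ℝ}

lemma measure_add_le_le (hX : HasBinomialPMF μ X m r) (hr0 : 0 ≤ r) (hr1 : r ≤ 1)
    (hmN : m * r ≤ N) (hθ0 : 0 ≤ θ) (hθ2 : θ ≤ 2) :
    μ {ω | m * r + θ * N ≤ X ω} ≤ ENNReal.ofReal (exp (-(θ ^ 2 / 4 * N))) := by
  have hs : |θ / 2| ≤ 1 := by rw [abs_le]; constructor <;> linarith
  refine (measure_mono fun ω hω => ?_).trans
    ((hX.measure_mul_le_mul_le_exp hr0 hr1 hs (m * r + θ * N)).trans
      (ENNReal.ofReal_le_ofReal (exp_le_exp.2 ?_)))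
  · exact mul_le_mul_of_nonneg_left (show _ ≤ (X ω : ℝ) from hω) (by linarith)
  · nlinarith [mul_le_mul_of_nonneg_right hmN (sq_nonneg θ)]

lemma measure_le_sub_le (hX : HasBinomialPMF μ X m r) (hr0 : 0 ≤ r) (hr1 : r ≤ 1)
    (hmN : m * r ≤ N) (hθ0 : 0 ≤ θ) (hθ2 : θ ≤ 2) :
    μ {ω | (X ω : ℝ) ≤ m * r - θ * N} ≤ ENNReal.ofReal (exp (-(θ ^ 2 / 4 * N))) := by
  have hs : |-(θ / 2)| ≤ 1 := by rw [abs_le]; constructor <;> linarith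
  refine (measure_mono fun ω hω => ?_).trans
    ((hX.measure_mul_le_mul_le_exp hr0 hr1 hs (m * r - θ * N)).trans
      (ENNReal.ofReal_le_ofReal (exp_le_exp.2 ?_)))
  · exact mul_le_mul_of_nonpos_left (show (X ω : ℝ) ≤ _ from hω) (by linarith)
  · nlinarith [mul_le_mul_of_nonneg_right hmN (sq_nonneg θ)]

lemma measure_le_sub_le_two_mul_exp {Y : Ω → ℕ} {m' : ℕ} {r' d : ℝ}
    (hX : HasBinomialPMF μ X m r) (hY : HasBinomialPMF μ Y m' r')
    (hr : r ∈ Set.Icc (0 : ℝ) 1) (hr' : r' ∈ Set.Icc (0 : ℝ) 1)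
    (hmN : (m : ℝ) ≤ N) (hm'N : (m' : ℝ) ≤ N) (hθ0 : 0 ≤ θ) (hθ2 : θ ≤ 2)
    (hd : m' * r' - m * r + 2 * θ * N ≤ d) :
    μ {ω | d ≤ (Y ω : ℝ) - X ω} ≤ ENNReal.ofReal (2 * exp (-(θ ^ 2 / 4 * N))) := by
  have hlow := hX.measure_le_sub_le hr.1 hr.2
    ((mul_le_of_le_one_right m.cast_nonneg hr.2).trans hmN) hθ0 hθ2
  have hup := hY.measure_add_le_le hr'.1 hr'.2
    ((mul_le_of_le_one_right m'.cast_nonneg hr'.2).trans hm'N) hθ0 hθ2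
  have hcover : {ω | d ≤ (Y ω : ℝ) - X ω} ⊆
      {ω | m' * r' + θ * N ≤ Y ω} ∪ {ω | (X ω : ℝ) ≤ m * r - θ * N} := by
    intro ω (hω : d ≤ _)
    by_contra! h
    simp only [Set.mem_union, Set.mem_ofPred_eq, not_or, not_le] at h
    linarith
  calc μ {ω | d ≤ (Y ω : ℝ) - X ω}
      ≤ μ {ω | m' * r' + θ * N ≤ Y ω} + μ {ω | (X ω : ℝ) ≤ m * r - θ * N} :=
        (measure_mono hcover).trans (measure_union_le _ _)
    _ ≤ ENNReal.ofReal (2 * exp (-(θ ^ 2 / 4 * N))) := by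
        rw [two_mul, ENNReal.ofReal_add (exp_nonneg _) (exp_nonneg _)]
        exact add_le_add hup hlow

end HasBinomialPMF

lemma one_sub_card_mul_le_measure_setOf_forall {Ω ι : Type*} [MeasurableSpace Ω]
    {μ : Measure Ω} [IsProbabilityMeasure μ] [Fintype ι] {P : ι → Ω → Prop} {e : ENNReal}
    (h : ∀ i, μ {ω | ¬P i ω} ≤ e) :
    1 - Fintype.card ι * e ≤ μ {ω | ∀ i, P i ω} := by
  have hcompl : μ {ω | ∀ i, P i ω}ᶜ ≤ Fintype.card ι * e := by
    calc μ {ω | ∀ i, P i ω}ᶜ = μ (⋃ i, {ω | ¬P i ω}) := by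
          congr 1; ext ω; simp
      _ ≤ ∑ i, μ {ω | ¬P i ω} := measure_iUnion_fintype_le μ _
      _ ≤ Fintype.card ι * e := by
          simpa using Finset.sum_le_sum fun i (_ : i ∈ Finset.univ) => h i
  rw [tsub_le_iff_right, ← measure_univ (μ := μ)]
  exact (measure_univ_le_add_compl _).trans (add_le_add le_rfl hcompl)

lemma vote_margins_pos {ε c δ p q : ℝ} (hε : ε ∈ Set.Ioo (0:ℝ) (1/2))
    (hcond : p ∈ Set.Ioo ((q * (1 - 2*ε) - 4*c*(ε - δ)) / (1 + 2*ε))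
                         ((q * (1 + 2*ε) + 4*c*(ε - δ)) / (1 - 2*ε))) :
    0 < (1 + 2*ε) * p - (1 - 2*ε) * q + 4*c*(ε - δ) ∧
      0 < (1 + 2*ε) * q - (1 - 2*ε) * p + 4*c*(ε - δ) := by
  have hlo := (div_lt_iff₀ (by linarith [hε.1])).1 hcond.1
  have hhi := (lt_div_iff₀ (by linarith [hε.2])).1 hcond.2
  constructor <;> linarith

lemma eventually_two_mul_exp_neg_le {a : ℝ} (ha : 0 < a) :
    ∀ᶠ x : ℝ in atTop, 2 * exp (-(a * x)) ≤ exp (-2 * √(x - 1)) := by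
  filter_upwards [eventually_ge_atTop 1, eventually_ge_atTop ((4 / a) ^ 2)] with x hx1 hxa
  have hsqrt_ge : 4 / a ≤ √x := Real.le_sqrt_of_sq_le hxa
  have hsqrt_one : 1 ≤ √x := Real.one_le_sqrt.2 hx1
  have hax : 4 * √x ≤ a * x := by
    calc 4 * √x = a * (4 / a) * √x := by field_simp
      _ ≤ a * √x * √x := by gcongr
      _ = a * x := by rw [mul_assoc, Real.mul_self_sqrt (by linarith)]
  have hsqrt_mono : √(x - 1) ≤ √x := Real.sqrt_le_sqrt (by linarith)
  calc 2 * exp (-(a * x)) = exp (log 2 - a * x) := by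
        rw [sub_eq_add_neg, exp_add, exp_log two_pos]
    _ ≤ exp (-2 * √(x - 1)) := by
        gcongr
        linarith [log_two_lt_d9]

theorem all_voters_unsurprised_general (ε c δ p q : ℝ)
    (hε : ε ∈ Set.Ioo (0:ℝ) (1/2))
    (hp : p ∈ Set.Ioo (0:ℝ) 1) (hq : q ∈ Set.Ioo (0:ℝ) 1)
    (hcond : p ∈ Set.Ioo ((q * (1 - 2*ε) - 4*c*(ε - δ)) / (1 + 2*ε))
                         ((q * (1 + 2*ε) + 4*c*(ε - δ)) / (1 - 2*ε))) :
    ∃ n₀ : ℕ, 2 ≤ n₀ ∧ ∀ n : ℕ, n₀ ≤ n → ∀ m1 m2 : ℕ, 1 ≤ m1 → 1 ≤ m2 →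
      (m1 : ℝ) = n * (1/2 + ε) → (m2 : ℝ) = n * (1/2 - ε) →
      ∀ (Ω : Type) [MeasurableSpace Ω] (μ : Measure Ω), IsProbabilityMeasure μ →
      ∀ (M1 M2 : Fin m1 → Ω → ℕ) (L1 L2 : Fin m2 → Ω → ℕ),
      (∀ i, Measurable (M1 i)) → (∀ i, Measurable (M2 i)) →
      (∀ i, Measurable (L1 i)) → (∀ i, Measurable (L2 i)) →
      (∀ i, ∀ k : ℕ, μ {ω | M1 i ω = k} =
        ENNReal.ofReal ((m1 - 1).choose k * p ^ k * (1 - p) ^ (m1 - 1 - k))) →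
      (∀ i, ∀ k : ℕ, μ {ω | M2 i ω = k} =
        ENNReal.ofReal (m2.choose k * q ^ k * (1 - q) ^ (m2 - k))) →
      (∀ i, ∀ k : ℕ, μ {ω | L1 i ω = k} =
        ENNReal.ofReal (m1.choose k * q ^ k * (1 - q) ^ (m1 - k))) →
      (∀ i, ∀ k : ℕ, μ {ω | L2 i ω = k} =
        ENNReal.ofReal ((m2 - 1).choose k * p ^ k * (1 - p) ^ (m2 - 1 - k))) →
      (∀ i, IndepFun (M1 i) (M2 i) μ) → (∀ i, IndepFun (L1 i) (L2 i) μ) →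
      ENNReal.ofReal (1 - (n : ℝ) * Real.exp (-2 * Real.sqrt ((n : ℝ) - 1))) ≤
        μ {ω | (∀ i : Fin m1, (M2 i ω : ℝ) - (M1 i ω : ℝ) < 2*c*(n : ℝ)*(ε - δ) + 1) ∧
               (∀ i : Fin m2, (L2 i ω : ℝ) - (L1 i ω : ℝ) < 2*c*(n : ℝ)*(ε - δ) - 1)} := by
  set α₁ := (1 + 2*ε) * p - (1 - 2*ε) * q + 4*c*(ε - δ)
  set α₂ := (1 + 2*ε) * q - (1 - 2*ε) * p + 4*c*(ε - δ)
  obtain ⟨hα₁, hα₂⟩ : 0 < α₁ ∧ 0 < α₂ := vote_margins_pos hε hcond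
  set β := min (min α₁ α₂) 1
  have hβ : 0 < β := lt_min (lt_min hα₁ hα₂) one_pos
  obtain ⟨n₀, hn₀⟩ := eventually_atTop.1 <| tendsto_natCast_atTop_atTop.eventually <|
    (eventually_ge_atTop (4 / β)).and
      (eventually_two_mul_exp_neg_le (a := (β / 8) ^ 2 / 4) (by positivity))
  refine ⟨max n₀ 2, le_max_right _ _, fun n hn m1 m2 hm1 hm2 hm1n hm2n Ω _ μ _ M1 M2 L1 L2
    _ _ _ _ (hM1 : ∀ i, HasBinomialPMF μ (M1 i) (m1 - 1) p)
    (hM2 : ∀ i, HasBinomialPMF μ (M2 i) m2 q) (hL1 : ∀ i, HasBinomialPMF μ (L1 i) m1 q) (hL2 : ∀ i, HasBinomialPMF μ (L2 i) (m2 - 1) p)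
    _ _ => ?_⟩
  obtain ⟨hnβ, hexp⟩ := hn₀ n (le_of_max_le_left hn)
  rw [div_le_iff₀ hβ] at hnβ
  have hnα₁ : n * β ≤ n * α₁ := by gcongr; exact (min_le_left _ _).trans (min_le_left _ _)
  have hnα₂ : n * β ≤ n * α₂ := by gcongr; exact (min_le_left _ _).trans (min_le_right _ _)
  have hm1le : (m1 : ℝ) ≤ n := by rw [hm1n]; nlinarith [hε.2]
  have hm2le : (m2 : ℝ) ≤ n := by rw [hm2n]; nlinarith [hε.1]
  have hm1' : ((m1 - 1 : ℕ) : ℝ) = m1 - 1 := Nat.cast_pred hm1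
  have hm2' : ((m2 - 1 : ℕ) : ℝ) = m2 - 1 := Nat.cast_pred hm2
  have hθ : β / 8 ≤ 2 := by linarith [min_le_right (min α₁ α₂) 1]
  have hclass₁ : ∀ i, μ {ω | ¬ (M2 i ω : ℝ) - M1 i ω < 2*c*n*(ε - δ) + 1} ≤
      ENNReal.ofReal (exp (-2 * √(n - 1))) := fun i => by
    simp only [not_lt]
    refine ((hM1 i).measure_le_sub_le_two_mul_exp (hM2 i) (Set.Ioo_subset_Icc_self hp)
      (Set.Ioo_subset_Icc_self hq) (by linarith) hm2le (by positivity) hθ ?_).trans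
      (ENNReal.ofReal_le_ofReal hexp)
    rw [hm1', hm1n, hm2n]
    nlinarith [hp.2]
  have hclass₂ : ∀ i, μ {ω | ¬ (L2 i ω : ℝ) - L1 i ω < 2*c*n*(ε - δ) - 1} ≤
      ENNReal.ofReal (exp (-2 * √(n - 1))) := fun i => by
    simp only [not_lt]
    refine ((hL1 i).measure_le_sub_le_two_mul_exp (hL2 i) (Set.Ioo_subset_Icc_self hq)
      (Set.Ioo_subset_Icc_self hp) hm1le (by linarith) (by positivity) hθ ?_).trans
      (ENNReal.ofReal_le_ofReal hexp)
    rw [hm2', hm1n, hm2n]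
    nlinarith [hp.1]
  have hunion := one_sub_card_mul_le_measure_setOf_forall (μ := μ)
    (P := Sum.elim (fun i ω => (M2 i ω : ℝ) - M1 i ω < 2*c*n*(ε - δ) + 1)
      (fun i ω => (L2 i ω : ℝ) - L1 i ω < 2*c*n*(ε - δ) - 1))
    (Sum.forall.2 ⟨hclass₁, hclass₂⟩)
  simp only [Sum.forall, Sum.elim_inl, Sum.elim_inr, Fintype.card_sum, Fintype.card_fin]
    at hunion
  have hm12 : ((m1 + m2 : ℕ) : ENNReal) = n := by
    exact_mod_cast (show ((m1 + m2 : ℕ) : ℝ) = n by push_cast; rw [hm1n, hm2n]; ring)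
  rwa [ENNReal.ofReal_sub _ (by positivity), ENNReal.ofReal_one,
    ENNReal.ofReal_mul n.cast_nonneg, ENNReal.ofReal_natCast, ← hm12]

/-- Influential media, all voters unsurprised: if p lies in the interval
((q(1−2ε) − 4c(ε−δ))/(1+2ε), (q(1+2ε) + 4c(ε−δ))/(1−2ε)), then for all sufficiently
large n the probability that every one of the n voters predicts the true winner a₁
is at least 1 − n exp(−2√(n−1)). -/
theorem all_voters_unsurprised (ε c δ p q : ℝ)
    (hε : ε ∈ Set.Ioo (0:ℝ) (1/2)) (hc : 0 < c)
    (hp : p ∈ Set.Ioo (0:ℝ) 1) (hq : q ∈ Set.Ioo (0:ℝ) 1)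
    (hcond : p ∈ Set.Ioo ((q * (1 - 2*ε) - 4*c*(ε - δ)) / (1 + 2*ε))
                         ((q * (1 + 2*ε) + 4*c*(ε - δ)) / (1 - 2*ε))) :
    ∃ n₀ : ℕ, 2 ≤ n₀ ∧ ∀ n : ℕ, n₀ ≤ n → ∀ m1 m2 : ℕ, 1 ≤ m1 → 1 ≤ m2 →
      (m1 : ℝ) = n * (1/2 + ε) → (m2 : ℝ) = n * (1/2 - ε) →
      ∀ (Ω : Type) [MeasurableSpace Ω] (μ : Measure Ω), IsProbabilityMeasure μ →
      ∀ (M1 M2 : Fin m1 → Ω → ℕ) (L1 L2 : Fin m2 → Ω → ℕ),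
      (∀ i, Measurable (M1 i)) → (∀ i, Measurable (M2 i)) →
      (∀ i, Measurable (L1 i)) → (∀ i, Measurable (L2 i)) →
      (∀ i, ∀ k : ℕ, μ {ω | M1 i ω = k} =
        ENNReal.ofReal ((m1 - 1).choose k * p ^ k * (1 - p) ^ (m1 - 1 - k))) →
      (∀ i, ∀ k : ℕ, μ {ω | M2 i ω = k} =
        ENNReal.ofReal (m2.choose k * q ^ k * (1 - q) ^ (m2 - k))) →
      (∀ i, ∀ k : ℕ, μ {ω | L1 i ω = k} =
        ENNReal.ofReal (m1.choose k * q ^ k * (1 - q) ^ (m1 - k))) →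
      (∀ i, ∀ k : ℕ, μ {ω | L2 i ω = k} =
        ENNReal.ofReal ((m2 - 1).choose k * p ^ k * (1 - p) ^ (m2 - 1 - k))) →
      (∀ i, IndepFun (M1 i) (M2 i) μ) → (∀ i, IndepFun (L1 i) (L2 i) μ) →
      ENNReal.ofReal (1 - (n : ℝ) * Real.exp (-2 * Real.sqrt ((n : ℝ) - 1))) ≤
        μ {ω | (∀ i : Fin m1, (M2 i ω : ℝ) - (M1 i ω : ℝ) < 2*c*(n : ℝ)*(ε - δ) + 1) ∧
               (∀ i : Fin m2, (L2 i ω : ℝ) - (L1 i ω : ℝ) < 2*c*(n : ℝ)*(ε - δ) - 1)} :=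
  all_voters_unsurprised_general ε c δ p q hε hp hq hcond
end

section
/- Let n ≥ 2, ε ∈ (0,1/2), a > 0, γ ∈ (0,1), δ ∈ ℝ, p > q with p, q ∈ (0,1). In the stochastic block model election with media prior Beta(a n^γ(1/2+ε−δ), a n^γ(1/2−ε+δ)), a majority voter i ∈ H₁ predicts a₂ iff N_{i,2} − N_{i,1} ≥ 2a n^γ(ε−δ) + 1, where N_{i,1} ~ Binomial(n(1/2+ε)−1, p) and N_{i,2} ~ Binomial(n(1/2−ε), q) independently. Then for sufficiently large n, P(voter i predicts a₂) ≤ exp(−2√(n−1)), and P(every voter in H₁ predicts a₁) ≥ 1 − (1/2 + ε)·n·exp(−2√(n−1)). -/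
open MeasureTheory ProbabilityTheory

lemma my_exp_le {t : ℝ} (h0 : 0 ≤ t) (h1 : t ≤ 1) : Real.exp t ≤ 1 + t + t ^ 2 := by
  have h := Real.exp_bound (x := t) (by rwa [abs_of_nonneg h0]) (n := 2) (by norm_num)
  rw [abs_of_nonneg h0] at h
  simp [Finset.sum_range_succ] at h
  have := abs_le.mp h
  nlinarith [this.2]

lemma my_exp_neg_le {t : ℝ} (h0 : 0 ≤ t) (h1 : t ≤ 1) : Real.exp (-t) ≤ 1 - t + t ^ 2 := by
  have h := Real.exp_bound (x := -t) (by rwa [abs_neg, abs_of_nonneg h0]) (n := 2) (by norm_num)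
  rw [abs_neg, abs_of_nonneg h0] at h
  simp [Finset.sum_range_succ] at h
  have := abs_le.mp h
  nlinarith [this.2]

lemma binom_tail_upper {Ω : Type} [MeasurableSpace Ω] (μ : Measure Ω)
    (X : Ω → ℕ) (m : ℕ) (r : ℝ) (hr0 : 0 ≤ r) (hr1 : r ≤ 1)
    (hpmf : ∀ k : ℕ, μ {ω | X ω = k} = ENNReal.ofReal ((m.choose k : ℝ) * r ^ k * (1 - r) ^ (m - k)))
    (s t : ℝ) (ht0 : 0 ≤ t) (ht1 : t ≤ 1) :
    μ {ω | s ≤ (X ω : ℝ)} ≤ ENNReal.ofReal (Real.exp (-(t * s) + m * (r * t + t ^ 2))) := by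
  have hr1' : 0 ≤ 1 - r := by linarith
  set pmf : ℕ → ℝ := fun k => (m.choose k : ℝ) * r ^ k * (1 - r) ^ (m - k) with hpmfdef
  have hpmf0 : ∀ k, 0 ≤ pmf k := by intro k; positivity
  have hsub : {ω | s ≤ (X ω : ℝ)} ⊆ ⋃ k : ℕ, {ω | X ω = k ∧ s ≤ (k : ℝ)} := by
    intro ω hω; exact Set.mem_iUnion.2 ⟨X ω, rfl, hω⟩
  refine le_trans (le_trans (measure_mono hsub) (measure_iUnion_le _)) ?_
  have hterm : ∀ k : ℕ, μ {ω | X ω = k ∧ s ≤ (k : ℝ)} ≤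
      ENNReal.ofReal (Real.exp (t * ((k : ℝ) - s)) * pmf k) := by
    intro k
    by_cases hk : s ≤ (k : ℝ)
    · have he : {ω | X ω = k ∧ s ≤ (k : ℝ)} = {ω | X ω = k} := by ext ω; simp [hk]
      rw [he, hpmf k]
      apply ENNReal.ofReal_le_ofReal
      exact le_mul_of_one_le_left (hpmf0 k) (Real.one_le_exp (by nlinarith : (0:ℝ) ≤ t * ((k : ℝ) - s)))
    · have he : {ω | X ω = k ∧ s ≤ (k : ℝ)} = ∅ := by ext ω; simp [hk]
      simp [he]
  refine le_trans (ENNReal.tsum_le_tsum hterm) ?_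
  have hzero : ∀ k ∉ Finset.range (m + 1),
      ENNReal.ofReal (Real.exp (t * ((k : ℝ) - s)) * pmf k) = 0 := by
    intro k hk
    have hmk : m < k := by simpa using Finset.mem_range.not.mp hk
    simp [hpmfdef, Nat.choose_eq_zero_of_lt hmk]
  rw [tsum_eq_sum hzero, ← ENNReal.ofReal_sum_of_nonneg (by intro k _; positivity)]
  apply ENNReal.ofReal_le_ofReal
  have hsum : ∑ k ∈ Finset.range (m + 1), Real.exp (t * ((k : ℝ) - s)) * pmf k
      = Real.exp (-(t * s)) * (r * Real.exp t + (1 - r)) ^ m := by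
    rw [add_pow, Finset.mul_sum]
    apply Finset.sum_congr rfl
    intro k _
    rw [show t * ((k : ℝ) - s) = (k : ℝ) * t + -(t * s) by ring, Real.exp_add,
      Real.exp_nat_mul, mul_pow]
    ring
  rw [hsum]
  have hbase0 : 0 ≤ r * Real.exp t + (1 - r) := by positivity
  have hbase : r * Real.exp t + (1 - r) ≤ Real.exp (r * t + t ^ 2) := by
    have h1 : Real.exp t ≤ 1 + t + t ^ 2 := my_exp_le ht0 ht1
    have h2 : r * t + t ^ 2 + 1 ≤ Real.exp (r * t + t ^ 2) := Real.add_one_le_exp _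
    nlinarith
  calc Real.exp (-(t * s)) * (r * Real.exp t + (1 - r)) ^ m
      ≤ Real.exp (-(t * s)) * Real.exp (r * t + t ^ 2) ^ m := by
        have := pow_le_pow_left₀ hbase0 hbase m
        nlinarith [Real.exp_pos (-(t * s)), this, pow_nonneg hbase0 m]
    _ = Real.exp (-(t * s) + m * (r * t + t ^ 2)) := by
        rw [← Real.exp_nat_mul, ← Real.exp_add]

lemma binom_tail_lower {Ω : Type} [MeasurableSpace Ω] (μ : Measure Ω)
    (X : Ω → ℕ) (m : ℕ) (r : ℝ) (hr0 : 0 ≤ r) (hr1 : r ≤ 1)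
    (hpmf : ∀ k : ℕ, μ {ω | X ω = k} = ENNReal.ofReal ((m.choose k : ℝ) * r ^ k * (1 - r) ^ (m - k)))
    (u t : ℝ) (ht0 : 0 ≤ t) (ht1 : t ≤ 1) :
    μ {ω | (X ω : ℝ) ≤ u} ≤ ENNReal.ofReal (Real.exp (t * u + m * (-(r * t) + t ^ 2))) := by
  have hr1' : 0 ≤ 1 - r := by linarith
  set pmf : ℕ → ℝ := fun k => (m.choose k : ℝ) * r ^ k * (1 - r) ^ (m - k) with hpmfdef
  have hpmf0 : ∀ k, 0 ≤ pmf k := by intro k; positivity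
  have hsub : {ω | (X ω : ℝ) ≤ u} ⊆ ⋃ k : ℕ, {ω | X ω = k ∧ (k : ℝ) ≤ u} := by
    intro ω hω; exact Set.mem_iUnion.2 ⟨X ω, rfl, hω⟩
  refine le_trans (le_trans (measure_mono hsub) (measure_iUnion_le _)) ?_
  have hterm : ∀ k : ℕ, μ {ω | X ω = k ∧ (k : ℝ) ≤ u} ≤
      ENNReal.ofReal (Real.exp (t * (u - (k : ℝ))) * pmf k) := by
    intro k
    by_cases hk : (k : ℝ) ≤ u
    · have he : {ω | X ω = k ∧ (k : ℝ) ≤ u} = {ω | X ω = k} := by ext ω; simp [hk]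
      rw [he, hpmf k]
      apply ENNReal.ofReal_le_ofReal
      exact le_mul_of_one_le_left (hpmf0 k) (Real.one_le_exp (by nlinarith : (0:ℝ) ≤ t * (u - (k : ℝ))))
    · have he : {ω | X ω = k ∧ (k : ℝ) ≤ u} = ∅ := by ext ω; simp [hk]
      simp [he]
  refine le_trans (ENNReal.tsum_le_tsum hterm) ?_
  have hzero : ∀ k ∉ Finset.range (m + 1),
      ENNReal.ofReal (Real.exp (t * (u - (k : ℝ))) * pmf k) = 0 := by
    intro k hk
    have hmk : m < k := by simpa using Finset.mem_range.not.mp hk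
    simp [hpmfdef, Nat.choose_eq_zero_of_lt hmk]
  rw [tsum_eq_sum hzero, ← ENNReal.ofReal_sum_of_nonneg (by intro k _; positivity)]
  apply ENNReal.ofReal_le_ofReal
  have hsum : ∑ k ∈ Finset.range (m + 1), Real.exp (t * (u - (k : ℝ))) * pmf k
      = Real.exp (t * u) * (r * Real.exp (-t) + (1 - r)) ^ m := by
    rw [add_pow, Finset.mul_sum]
    apply Finset.sum_congr rfl
    intro k _
    rw [show t * (u - (k : ℝ)) = (k : ℝ) * (-t) + t * u by ring, Real.exp_add,
      Real.exp_nat_mul, mul_pow]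
    ring
  rw [hsum]
  have hbase0 : 0 ≤ r * Real.exp (-t) + (1 - r) := by positivity
  have hbase : r * Real.exp (-t) + (1 - r) ≤ Real.exp (-(r * t) + t ^ 2) := by
    have h1 : Real.exp (-t) ≤ 1 - t + t ^ 2 := my_exp_neg_le ht0 ht1
    have h2 : -(r * t) + t ^ 2 + 1 ≤ Real.exp (-(r * t) + t ^ 2) := Real.add_one_le_exp _
    nlinarith
  calc Real.exp (t * u) * (r * Real.exp (-t) + (1 - r)) ^ m
      ≤ Real.exp (t * u) * Real.exp (-(r * t) + t ^ 2) ^ m := by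
        have := pow_le_pow_left₀ hbase0 hbase m
        nlinarith [Real.exp_pos (t * u), this, pow_nonneg hbase0 m]
    _ = Real.exp (t * u + m * (-(r * t) + t ^ 2)) := by
        rw [← Real.exp_nat_mul, ← Real.exp_add]

lemma eventually_rpow_add_le (A B K α : ℝ) (hα : α < 1) (hK : 0 < K) :
    ∀ᶠ x : ℝ in Filter.atTop, A * x ^ α + B ≤ K * x := by
  have h0 : Filter.Tendsto (fun x : ℝ => |A| * x ^ (α - 1)) Filter.atTop (nhds (|A| * 0)) := by
    apply Filter.Tendsto.const_mul
    rw [show α - 1 = -(1 - α) by ring]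
    exact tendsto_rpow_neg_atTop (by linarith)
  rw [mul_zero] at h0
  have h1 : ∀ᶠ x : ℝ in Filter.atTop, |A| * x ^ (α - 1) < K / 2 :=
    h0.eventually_lt_const (by positivity)
  filter_upwards [h1, Filter.eventually_ge_atTop (2 * B / K),
    Filter.eventually_ge_atTop (1 : ℝ)] with x hx1 hx2 hx3
  have hx0 : (0 : ℝ) < x := by linarith
  have hxα : x ^ α = x ^ (α - 1) * x := by
    rw [← Real.rpow_add_one (ne_of_gt hx0)]; ring_nf
  have hα0 : 0 ≤ x ^ α := Real.rpow_nonneg hx0.le α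
  have hB : B ≤ K / 2 * x := by
    rw [div_le_iff₀ hK] at hx2
    nlinarith
  have hA : A * x ^ α ≤ K / 2 * x := by
    calc A * x ^ α ≤ |A| * x ^ α := by nlinarith [le_abs_self A]
      _ = |A| * x ^ (α - 1) * x := by rw [hxα]; ring
      _ ≤ K / 2 * x := by nlinarith
  linarith
set_option maxHeartbeats 1000000 in
/-- Uninfluential media, majority voters: with media weight a n^γ (γ ∈ (0,1)) and
p > q, for all sufficiently large n each majority voter predicts a₂ with probability
at most exp(−2√(n−1)), and every majority voter predicts a₁ simultaneously with
probability at least 1 − (1/2 + ε) n exp(−2√(n−1)). -/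
theorem uninfluential_majority_unsurprised (ε a γ δ p q : ℝ)
    (hε : ε ∈ Set.Ioo (0:ℝ) (1/2)) (ha : 0 < a) (hγ : γ ∈ Set.Ioo (0:ℝ) 1)
    (hp : p ∈ Set.Ioo (0:ℝ) 1) (hq : q ∈ Set.Ioo (0:ℝ) 1) (hpq : q < p) :
    ∃ n₀ : ℕ, 2 ≤ n₀ ∧ ∀ n : ℕ, n₀ ≤ n → ∀ m1 m2 : ℕ, 1 ≤ m1 →
      (m1 : ℝ) = n * (1/2 + ε) → (m2 : ℝ) = n * (1/2 - ε) →
      ∀ (Ω : Type) [MeasurableSpace Ω] (μ : Measure Ω), IsProbabilityMeasure μ →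
      ∀ N1 N2 : Fin m1 → Ω → ℕ, (∀ i, Measurable (N1 i)) → (∀ i, Measurable (N2 i)) →
      (∀ i, ∀ k : ℕ, μ {ω | N1 i ω = k} =
        ENNReal.ofReal ((m1 - 1).choose k * p ^ k * (1 - p) ^ (m1 - 1 - k))) →
      (∀ i, ∀ k : ℕ, μ {ω | N2 i ω = k} =
        ENNReal.ofReal (m2.choose k * q ^ k * (1 - q) ^ (m2 - k))) →
      (∀ i, IndepFun (N1 i) (N2 i) μ) →
      (∀ i : Fin m1,
        μ {ω | 2*a*(n : ℝ) ^ γ * (ε - δ) + 1 ≤ (N2 i ω : ℝ) - (N1 i ω : ℝ)} ≤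
          ENNReal.ofReal (Real.exp (-2 * Real.sqrt ((n : ℝ) - 1)))) ∧
      ENNReal.ofReal (1 - (1/2 + ε) * (n : ℝ) * Real.exp (-2 * Real.sqrt ((n : ℝ) - 1))) ≤
        μ {ω | ∀ i : Fin m1, (N2 i ω : ℝ) - (N1 i ω : ℝ) < 2*a*(n : ℝ) ^ γ * (ε - δ) + 1} := by
  obtain ⟨hε0, hε2⟩ := hε
  obtain ⟨hγ0, hγ1⟩ := hγ
  obtain ⟨hp0, hp1⟩ := hp
  obtain ⟨hq0, hq1⟩ := hq
  set c : ℝ := (1/2 + ε)*p - (1/2 - ε)*q with hcdef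
  clear_value c
  have hq2 : (1/2 - ε)*q ≤ (1/2 + ε)*q := by nlinarith
  have hq3 : 0 ≤ (1/2 - ε)*q := by nlinarith
  have hp2 : (1/2 + ε)*q < (1/2 + ε)*p := by nlinarith
  have hp3 : (1/2 + ε)*p ≤ p := by nlinarith
  have hc0 : 0 < c := by rw [hcdef]; linarith
  have hc1 : c ≤ 1 := by rw [hcdef]; linarith
  have hev1 : ∀ᶠ x : ℝ in Filter.atTop, 2*a*|ε-δ| * x ^ γ + (1 + p) ≤ (c/2) * x :=
    eventually_rpow_add_le _ _ _ _ hγ1 (by positivity)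
  have hev2' : ∀ᶠ x : ℝ in Filter.atTop, 2 * x ^ ((1:ℝ)/2) + Real.log 2 ≤ (c^2/64) * x :=
    eventually_rpow_add_le _ _ _ _ (by norm_num) (by positivity)
  have hev2 : ∀ᶠ x : ℝ in Filter.atTop, 2 * Real.sqrt x + Real.log 2 ≤ (c^2/64) * x := by
    filter_upwards [hev2'] with x h
    rwa [Real.sqrt_eq_rpow]
  have hevN : ∀ᶠ n : ℕ in Filter.atTop,
      (2*a*|ε-δ| * (n:ℝ) ^ γ + (1 + p) ≤ (c/2) * (n:ℝ) ∧
       2 * Real.sqrt (n:ℝ) + Real.log 2 ≤ (c^2/64) * (n:ℝ)) :=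
    (tendsto_natCast_atTop_atTop (R := ℝ)).eventually (hev1.and hev2)
  obtain ⟨N, hN⟩ := Filter.eventually_atTop.mp hevN
  refine ⟨max N 2, le_max_right _ _, ?_⟩
  intro n hn m1 m2 hm1 hm1e hm2e Ω _ μ hμ N1 N2 hN1m hN2m hpmf1 hpmf2 hind
  haveI := hμ
  obtain ⟨H1, H2⟩ := hN n (le_trans (le_max_left _ _) hn)
  have hn2 : 2 ≤ n := le_trans (le_max_right _ _) hn
  have hnR : (2:ℝ) ≤ (n:ℝ) := by exact_mod_cast hn2
  have hn0 : (0:ℝ) < (n:ℝ) := by linarith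
  have hnγ0 : (0:ℝ) ≤ (n:ℝ) ^ γ := Real.rpow_nonneg hn0.le γ
  set T : ℝ := 2*a*(n : ℝ) ^ γ * (ε - δ) + 1 with hTdef
  clear_value T
  have hT : |T| + p ≤ (c/2) * (n:ℝ) := by
    have h1 : |T| ≤ 2*a*(n:ℝ)^γ * |ε-δ| + 1 := by
      rw [hTdef]
      refine le_trans (abs_add_le _ _) ?_
      rw [abs_mul, abs_of_nonneg (by positivity : (0:ℝ) ≤ 2*a*(n:ℝ)^γ), abs_one]
    have h2 : 2*a*(n:ℝ)^γ * |ε-δ| = 2*a*|ε-δ| * (n:ℝ)^γ := by ring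
    linarith [H1, h1, h2 ▸ h1]
  set m1' : ℕ := m1 - 1 with hm1'def
  have hm1'e : (m1' : ℝ) = (n:ℝ) * (1/2 + ε) - 1 := by
    rw [hm1'def, Nat.cast_sub hm1, hm1e]; norm_num
  clear_value m1'
  have hm1'n : (m1' : ℝ) ≤ (n:ℝ) := by rw [hm1'e]; nlinarith
  have hm2n : (m2 : ℝ) ≤ (n:ℝ) := by rw [hm2e]; nlinarith
  have hm2pos : (0:ℝ) ≤ (m2:ℝ) := Nat.cast_nonneg m2
  set Δ : ℝ := ((c * (n:ℝ) - p) + T) / 2 with hΔdef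
  clear_value Δ
  have hΔlb : (c/4) * (n:ℝ) ≤ Δ := by
    have := neg_abs_le T
    rw [hΔdef]; linarith
  have hΔub : Δ ≤ (n:ℝ) := by
    have h1 : T ≤ |T| := le_abs_self T
    have h2 : c * (n:ℝ) ≤ (n:ℝ) := by nlinarith
    rw [hΔdef]; linarith
  have hΔ0 : 0 ≤ Δ := le_trans (by positivity) hΔlb
  set t : ℝ := Δ / (2 * (n:ℝ)) with htdef
  clear_value t
  have ht0 : 0 ≤ t := by rw [htdef]; positivity
  have ht1 : t ≤ 1 := by
    rw [htdef, div_le_one (by positivity)]; linarith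
  set s : ℝ := (m2:ℝ) * q + Δ with hsdef
  clear_value s
  -- the common exponent bound
  have hexp : -(t*Δ) + (n:ℝ) * t^2 ≤ -2 * Real.sqrt ((n:ℝ) - 1) - Real.log 2 := by
    have he1 : -(t*Δ) + (n:ℝ) * t^2 = -(Δ^2 / (4*(n:ℝ))) := by
      rw [htdef]; field_simp; ring
    have he2 : c^2 * (n:ℝ) / 64 ≤ Δ^2 / (4*(n:ℝ)) := by
      rw [div_le_div_iff₀ (by positivity) (by positivity)]
      nlinarith [mul_self_le_mul_self (by positivity : (0:ℝ) ≤ c/4 * (n:ℝ)) hΔlb]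
    have he3 : Real.sqrt ((n:ℝ) - 1) ≤ Real.sqrt (n:ℝ) :=
      Real.sqrt_le_sqrt (by linarith)
    rw [he1]
    have := H2
    nlinarith [he2, he3]
  have hhalf : ∀ m : ℕ, (m:ℝ) ≤ (n:ℝ) →
      Real.exp (-(t*Δ) + (m:ℝ) * t^2) ≤ Real.exp (-2 * Real.sqrt ((n:ℝ) - 1)) / 2 := by
    intro m hm
    have h1 : -(t*Δ) + (m:ℝ) * t^2 ≤ -2 * Real.sqrt ((n:ℝ) - 1) - Real.log 2 := by
      nlinarith [hexp, sq_nonneg t, hm]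
    calc Real.exp (-(t*Δ) + (m:ℝ) * t^2)
        ≤ Real.exp (-2 * Real.sqrt ((n:ℝ) - 1) - Real.log 2) := Real.exp_le_exp.mpr h1
      _ = Real.exp (-2 * Real.sqrt ((n:ℝ) - 1)) / 2 := by
          rw [Real.exp_sub, Real.exp_log (by norm_num)]
  -- per-voter bound
  have hvoter : ∀ i : Fin m1,
      μ {ω | T ≤ (N2 i ω : ℝ) - (N1 i ω : ℝ)} ≤
        ENNReal.ofReal (Real.exp (-2 * Real.sqrt ((n : ℝ) - 1))) := by
    intro i
    have hB2 := binom_tail_upper μ (N2 i) m2 q hq0.le hq1.le (hpmf2 i) s t ht0 ht1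
    have hB1 := binom_tail_lower μ (N1 i) m1' p hp0.le hp1.le (hpmf1 i) (s - T) t ht0 ht1
    have hsub : {ω | T ≤ (N2 i ω : ℝ) - (N1 i ω : ℝ)} ⊆
        {ω | s ≤ (N2 i ω : ℝ)} ∪ {ω | (N1 i ω : ℝ) ≤ s - T} := by
      intro ω hω
      rcases le_or_gt s ((N2 i ω : ℝ)) with h | h
      · exact Or.inl h
      · refine Or.inr ?_
        have : T ≤ (N2 i ω : ℝ) - (N1 i ω : ℝ) := hω
        simp only [Set.mem_setOf_eq]
        linarith
    have hE2 : -(t * s) + (m2:ℝ) * (q * t + t ^ 2) = -(t*Δ) + (m2:ℝ) * t^2 := by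
      rw [hsdef]; ring
    have hE1 : t * (s - T) + (m1':ℝ) * (-(p * t) + t ^ 2) = -(t*Δ) + (m1':ℝ) * t^2 := by
      have hG : (m1':ℝ) * p = (m2:ℝ) * q + (c * (n:ℝ) - p) := by
        rw [hm1'e, hm2e, hcdef]; ring
      linear_combination t * hsdef + (2*t) * hΔdef - t * hG
    calc μ {ω | T ≤ (N2 i ω : ℝ) - (N1 i ω : ℝ)}
        ≤ μ {ω | s ≤ (N2 i ω : ℝ)} + μ {ω | (N1 i ω : ℝ) ≤ s - T} :=
          le_trans (measure_mono hsub) (measure_union_le _ _)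
      _ ≤ ENNReal.ofReal (Real.exp (-(t * s) + (m2:ℝ) * (q * t + t ^ 2))) +
          ENNReal.ofReal (Real.exp (t * (s - T) + (m1':ℝ) * (-(p * t) + t ^ 2))) :=
          add_le_add hB2 hB1
      _ = ENNReal.ofReal (Real.exp (-(t*Δ) + (m2:ℝ) * t^2) +
            Real.exp (-(t*Δ) + (m1':ℝ) * t^2)) := by
          rw [hE2, hE1, ENNReal.ofReal_add (Real.exp_pos _).le (Real.exp_pos _).le]
      _ ≤ ENNReal.ofReal (Real.exp (-2 * Real.sqrt ((n : ℝ) - 1))) := by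
          apply ENNReal.ofReal_le_ofReal
          have b1 := hhalf m2 hm2n
          have b2 := hhalf m1' hm1'n
          linarith
  refine ⟨hvoter, ?_⟩
  -- part 2
  set bad : Set Ω := ⋃ i : Fin m1, {ω | T ≤ (N2 i ω : ℝ) - (N1 i ω : ℝ)} with hbaddef
  have hmeas_i : ∀ i : Fin m1, MeasurableSet {ω | T ≤ (N2 i ω : ℝ) - (N1 i ω : ℝ)} := by
    intro i
    exact measurableSet_le measurable_const
      ((measurable_from_top.comp (hN2m i)).sub (measurable_from_top.comp (hN1m i)))
  have hbadmeas : MeasurableSet bad := MeasurableSet.iUnion hmeas_i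
  have hgood : {ω | ∀ i : Fin m1, (N2 i ω : ℝ) - (N1 i ω : ℝ) < T} = badᶜ := by
    ext ω
    simp only [hbaddef, Set.mem_setOf_eq, Set.mem_compl_iff, Set.mem_iUnion, not_exists,
      Set.mem_setOf_eq]
    exact ⟨fun h i => not_le.mpr (h i), fun h i => not_le.mp (h i)⟩
  have hbadle : μ bad ≤ ENNReal.ofReal ((1/2 + ε) * (n:ℝ) * Real.exp (-2 * Real.sqrt ((n:ℝ) - 1))) := by
    calc μ bad ≤ ∑' i : Fin m1, μ {ω | T ≤ (N2 i ω : ℝ) - (N1 i ω : ℝ)} :=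
          measure_iUnion_le _
      _ ≤ ∑' _i : Fin m1, ENNReal.ofReal (Real.exp (-2 * Real.sqrt ((n:ℝ) - 1))) :=
          ENNReal.tsum_le_tsum hvoter
      _ = (m1 : ENNReal) * ENNReal.ofReal (Real.exp (-2 * Real.sqrt ((n:ℝ) - 1))) := by
          rw [tsum_fintype]
          simp [Finset.sum_const, Fintype.card_fin, nsmul_eq_mul]
      _ = ENNReal.ofReal ((1/2 + ε) * (n:ℝ) * Real.exp (-2 * Real.sqrt ((n:ℝ) - 1))) := by
          rw [← ENNReal.ofReal_natCast m1, ← ENNReal.ofReal_mul (Nat.cast_nonneg m1), hm1e]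
          ring_nf
  rw [hgood, prob_compl_eq_one_sub hbadmeas]
  have hx0 : 0 ≤ (1/2 + ε) * (n:ℝ) * Real.exp (-2 * Real.sqrt ((n:ℝ) - 1)) := by positivity
  rw [ENNReal.ofReal_sub _ hx0, ENNReal.ofReal_one]
  exact tsub_le_tsub_left hbadle 1
end
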